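/- arXiv:2511.01686 — 8 statements merged into one kernel-verified Lean document; each statement's English description precedes it below -/
import Mathlib

section
/- For Hermitian m×m complex matrices H and X, the function C(t) = log Tr(exp(tX - H)) is differentiable with C'(t) = Tr(X exp(tX - H)) / Tr(exp(tX - H)). -/
open Matrix NormedSpace Nat

section aux

variable {m : ℕ}

attribute [local instance] Matrix.linftyOpNormedRing Matrix.linftyOpNormedAlgebra

noncomputable def traceCLM (m : ℕ) : Matrix (Fin m) (Fin m) ℂ →L[ℂ] ℂ :=
  LinearMap.toContinuousLinearMap (Matrix.traceLinearMap (Fin m) ℂ ℂ)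

@[simp] lemma traceCLM_apply (M : Matrix (Fin m) (Fin m) ℂ) : traceCLM m M = M.trace := rfl

lemma trace_norm_le (M : Matrix (Fin m) (Fin m) ℂ) : ‖M.trace‖ ≤ m * ‖M‖ := by
  classical
  calc ‖M.trace‖ ≤ ∑ i : Fin m, ‖M i i‖ := norm_sum_le _ _
  _ ≤ ∑ _i : Fin m, ‖M‖ := by
      refine Finset.sum_le_sum fun i _ => ?_
      calc ‖M i i‖ ≤ ∑ j, ‖M i j‖ := Finset.single_le_sum (f := fun j => ‖M i j‖)
            (fun j _ => norm_nonneg _) (Finset.mem_univ i)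
      _ ≤ ‖M‖ := by
          rw [Matrix.linfty_opNorm_def]
          have := Finset.le_sup (f := fun i => ∑ j, ‖M i j‖₊) (Finset.mem_univ i)
          have := NNReal.coe_le_coe.mpr this
          simpa [NNReal.coe_sum] using this
  _ = m * ‖M‖ := by simp [Finset.sum_const, mul_comm]


lemma hasDerivAt_affine (X H : Matrix (Fin m) (Fin m) ℂ) (t : ℝ) :
    HasDerivAt (fun s : ℝ => s • X - H) X t := by
  have h := ((hasDerivAt_id t).smul_const X).sub_const H
  simp only [id_eq, one_smul] at h
  exact h

lemma pow_deriv (X H : Matrix (Fin m) (Fin m) ℂ) (t : ℝ) (n : ℕ) :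
    ∃ D : Matrix (Fin m) (Fin m) ℂ,
      HasDerivAt (fun s : ℝ => (s • X - H) ^ n) D t ∧
      ∀ k : ℕ, ((t • X - H) ^ k * D).trace
        = n * (X * (t • X - H) ^ (n - 1 + k)).trace := by
  induction n with
  | zero =>
      refine ⟨0, ?_, ?_⟩
      · simp only [pow_zero]
        exact hasDerivAt_const t (1 : Matrix (Fin m) (Fin m) ℂ)
      · intro k; simp
  | succ n ih =>
      obtain ⟨D, hD, htr⟩ := ih
      set A : Matrix (Fin m) (Fin m) ℂ := t • X - H with hA
      refine ⟨X * A ^ n + A * D, ?_, ?_⟩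
      · have h := (hasDerivAt_affine X H t).mul hD
        have heq : (fun s : ℝ => (s • X - H) ^ (n + 1))
            = fun s : ℝ => (s • X - H) * (s • X - H) ^ n := by
          funext s; exact pow_succ' _ _
        rw [heq]
        exact h
      · intro k
        have e1 : (A ^ k * (X * A ^ n)).trace = (X * A ^ (n + k)).trace := by
          rw [Matrix.trace_mul_comm, mul_assoc, ← pow_add]
        have e2 : (A ^ k * (A * D)).trace = (A ^ (k + 1) * D).trace := by
          rw [← mul_assoc, ← pow_succ]
        rw [mul_add, Matrix.trace_add, e1, e2, htr (k + 1)]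
        rcases Nat.eq_zero_or_pos n with rfl | hn
        · simp
        · have harith : n - 1 + (k + 1) = n + k := by omega
          have harith2 : n + 1 - 1 + k = n + k := by omega
          rw [harith, harith2]
          push_cast
          ring


lemma term_hasDerivAt (X H : Matrix (Fin m) (Fin m) ℂ) (n : ℕ) (s : ℝ) :
    HasDerivAt (fun r : ℝ => ((n !⁻¹ : ℂ)) * ((r • X - H) ^ n).trace)
      ((n !⁻¹ : ℂ) * ((n : ℂ) * (X * (s • X - H) ^ (n - 1)).trace)) s := by
  obtain ⟨D, hD, htr⟩ := pow_deriv X H s n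
  have h0 := htr 0
  simp only [pow_zero, one_mul, add_zero] at h0
  have h2 : HasDerivAt (fun r : ℝ => ((r • X - H) ^ n).trace)
      (((traceCLM m).restrictScalars ℝ) D) s :=
    (((traceCLM m).restrictScalars ℝ).hasFDerivAt.comp_hasDerivAt s hD)
  have h3 : ((traceCLM m).restrictScalars ℝ) D = D.trace := rfl
  rw [h3, h0] at h2
  exact h2.const_mul _

end aux

section main
variable {m : ℕ}

lemma trace_exp_hasDerivAt [Nonempty (Fin m)] (X H : Matrix (Fin m) (Fin m) ℂ) (t : ℝ) :
    HasDerivAt (fun s : ℝ => (NormedSpace.exp (s • X - H)).trace)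
      ((X * NormedSpace.exp (t • X - H)).trace) t := by
  letI : SeminormedRing (Matrix (Fin m) (Fin m) ℂ) := Matrix.linftyOpSemiNormedRing
  letI : NormedRing (Matrix (Fin m) (Fin m) ℂ) := Matrix.linftyOpNormedRing
  letI : NormedAlgebra ℂ (Matrix (Fin m) (Fin m) ℂ) := Matrix.linftyOpNormedAlgebra
  set g : ℕ → ℝ → ℂ := fun n r => ((n ! : ℂ))⁻¹ * ((r • X - H) ^ n).trace with hg_def
  set g' : ℕ → ℝ → ℂ :=
    fun n s => ((n ! : ℂ))⁻¹ * ((n : ℂ) * (X * (s • X - H) ^ (n - 1)).trace) with hg'_def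
  set R : ℝ := ‖X‖ * (|t| + 1) + ‖H‖ with hRdef
  set u : ℕ → ℝ := fun n => Nat.rec 0 (fun k _ => (m * ‖X‖) * (R ^ k / k !)) n with hu_def
  have hu : Summable u := by
    refine (summable_nat_add_iff 1).mp ?_
    simpa [hu_def] using (Real.summable_pow_div_factorial R).mul_left (m * ‖X‖)
  have hAle : ∀ y ∈ Metric.ball t 1, ‖y • X - H‖ ≤ R := by
    intro y hy
    have h2 : |y - t| < 1 := by simpa [Real.dist_eq] using hy
    have hy' : |y| ≤ |t| + 1 := by
      have := abs_sub_abs_le_abs_sub y t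
      linarith
    have : ‖y • X‖ ≤ ‖X‖ * (|t| + 1) := by
      rw [norm_smul, Real.norm_eq_abs, mul_comm]
      exact mul_le_mul_of_nonneg_left hy' (norm_nonneg X)
    calc ‖y • X - H‖ ≤ ‖y • X‖ + ‖H‖ := norm_sub_le _ _
    _ ≤ ‖X‖ * (|t| + 1) + ‖H‖ := by linarith
  have hgderiv : ∀ (n : ℕ), ∀ y ∈ Metric.ball t 1, HasDerivAt (g n) (g' n y) y :=
    fun n y _ => term_hasDerivAt X H n y
  have hbound : ∀ (n : ℕ), ∀ y ∈ Metric.ball t 1, ‖g' n y‖ ≤ u n := by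
    rintro (_ | n) y hy
    · simp [hg'_def, hu_def]
    · have hAy := hAle y hy
      have hR0 : (0:ℝ) ≤ R := le_trans (norm_nonneg _) hAy
      have h1 : ‖((X * (y • X - H) ^ n)).trace‖ ≤ m * (‖X‖ * R ^ n) := by
        refine le_trans (trace_norm_le _) ?_
        have : ‖X * (y • X - H) ^ n‖ ≤ ‖X‖ * R ^ n := by
          refine le_trans (norm_mul_le _ _) ?_
          exact mul_le_mul_of_nonneg_left
            (le_trans (norm_pow_le _ _) (pow_le_pow_left₀ (norm_nonneg _) hAy n))
            (norm_nonneg X)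
        exact mul_le_mul_of_nonneg_left this (Nat.cast_nonneg m)
      have e1 : ‖((((n + 1)! : ℕ) : ℂ))⁻¹‖ = ((((n + 1)! : ℕ) : ℝ))⁻¹ := by
        rw [norm_inv]
        norm_cast
      have e2 : ‖(((n + 1 : ℕ)) : ℂ)‖ = (((n + 1 : ℕ)) : ℝ) := by
        norm_cast
      calc ‖g' (n + 1) y‖
          = ((((n + 1)! : ℕ) : ℝ))⁻¹ * ((((n + 1 : ℕ)) : ℝ) * ‖((X * (y • X - H) ^ n)).trace‖) := by
            simp only [hg'_def, Nat.add_sub_cancel, norm_mul, e1, e2]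
      _ ≤ ((((n + 1)! : ℕ) : ℝ))⁻¹ * ((((n + 1 : ℕ)) : ℝ) * ((m : ℝ) * (‖X‖ * R ^ n))) := by
            gcongr
      _ = (m * ‖X‖) * (R ^ n / n !) := by
            rw [Nat.factorial_succ]
            push_cast
            field_simp
      _ = u (n + 1) := rfl
  have hg0 : Summable fun n => g n t := by
    have h := (NormedSpace.expSeries_summable' (𝕂 := ℂ) (t • X - H)).mapL (traceCLM m)
    refine h.congr fun n => ?_
    simp [hg_def, smul_eq_mul]
  have key := hasDerivAt_tsum_of_isPreconnected hu Metric.isOpen_ball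
    (convex_ball t (1:ℝ)).isPreconnected hgderiv hbound (Metric.mem_ball_self one_pos)
    hg0 (Metric.mem_ball_self one_pos)
  have hfun : ∀ z : ℝ, ∑' n, g n z = (NormedSpace.exp (z • X - H)).trace := by
    intro z
    have h1 := (NormedSpace.exp_series_hasSum_exp' (𝕂 := ℂ) (z • X - H)).mapL (traceCLM m)
    calc ∑' n, g n z = ∑' n : ℕ, (traceCLM m) (((n ! : ℂ))⁻¹ • (z • X - H) ^ n) :=
          tsum_congr fun n => by simp [hg_def, smul_eq_mul]
    _ = (NormedSpace.exp (z • X - H)).trace := h1.tsum_eq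
  have key2 : HasDerivAt (fun z : ℝ => (NormedSpace.exp (z • X - H)).trace)
      (∑' n, g' n t) t :=
    key.congr_of_eventuallyEq (Filter.Eventually.of_forall fun z => (hfun z).symm)
  have hval : ∑' n, g' n t = (X * NormedSpace.exp (t • X - H)).trace := by
    set L : Matrix (Fin m) (Fin m) ℂ →L[ℂ] ℂ :=
      (traceCLM m).comp (ContinuousLinearMap.mul ℂ (Matrix (Fin m) (Fin m) ℂ) X) with hL
    have hXexp : (X * NormedSpace.exp (t • X - H)).trace
        = ∑' n : ℕ, ((n ! : ℂ))⁻¹ * (X * (t • X - H) ^ n).trace := by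
      have h1 := (NormedSpace.exp_series_hasSum_exp' (𝕂 := ℂ) (t • X - H)).mapL L
      calc (X * NormedSpace.exp (t • X - H)).trace
          = L (NormedSpace.exp (t • X - H)) := rfl
      _ = ∑' n : ℕ, L (((n ! : ℂ))⁻¹ • (t • X - H) ^ n) := h1.tsum_eq.symm
      _ = ∑' n : ℕ, ((n ! : ℂ))⁻¹ * (X * (t • X - H) ^ n).trace := by
            refine tsum_congr fun n => ?_
            show ((X * ((n ! : ℂ))⁻¹ • (t • X - H) ^ n)).trace = _
            rw [mul_smul_comm, Matrix.trace_smul, smul_eq_mul]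
    have hsum : Summable fun n => g' n t :=
      hu.of_norm_bounded (fun n => hbound n t (Metric.mem_ball_self one_pos))
    rw [hsum.tsum_eq_zero_add]
    have hzero : g' 0 t = 0 := by simp [hg'_def]
    have hsucc : ∀ n : ℕ, g' (n + 1) t = (n !⁻¹ : ℂ) * (X * (t • X - H) ^ n).trace := by
      intro n
      have hne : ((n : ℂ) + 1) ≠ 0 := Nat.cast_add_one_ne_zero n
      simp only [hg'_def, Nat.add_sub_cancel, Nat.factorial_succ]
      push_cast
      field_simp
    rw [hzero, zero_add, tsum_congr hsucc, hXexp]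
  rw [← hval]
  exact key2

lemma trace_exp_re_pos [Nonempty (Fin m)] (A : Matrix (Fin m) (Fin m) ℂ)
    (hA : A.IsHermitian) : 0 < (Matrix.trace (NormedSpace.exp A)).re := by
  classical
  letI : SeminormedRing (Matrix (Fin m) (Fin m) ℂ) := Matrix.linftyOpSemiNormedRing
  letI : NormedRing (Matrix (Fin m) (Fin m) ℂ) := Matrix.linftyOpNormedRing
  letI : NormedAlgebra ℂ (Matrix (Fin m) (Fin m) ℂ) := Matrix.linftyOpNormedAlgebra
  set V : Matrix (Fin m) (Fin m) ℂ := (Matrix.IsHermitian.eigenvectorUnitary hA :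
    Matrix (Fin m) (Fin m) ℂ) with hV
  have hmem := (Matrix.IsHermitian.eigenvectorUnitary hA).2
  have hstar : star V * V = 1 := (Matrix.mem_unitaryGroup_iff').mp hmem
  have hstar' : V * star V = 1 := (Matrix.mem_unitaryGroup_iff).mp hmem
  have hVinv : V⁻¹ = star V := Matrix.inv_eq_left_inv hstar
  have hVunit : IsUnit V := ⟨⟨V, star V, hstar', hstar⟩, rfl⟩
  have hspec := hA.spectral_theorem
  set D : Matrix (Fin m) (Fin m) ℂ :=
    Matrix.diagonal (RCLike.ofReal ∘ hA.eigenvalues) with hD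
  have hAe : A = V * D * V⁻¹ := by rw [hVinv]; exact hspec
  have hexp : NormedSpace.exp A = V * NormedSpace.exp D * V⁻¹ := by
    rw [hAe]; exact Matrix.exp_conj V D hVunit
  have htr : (NormedSpace.exp A).trace = (NormedSpace.exp D).trace := by
    rw [hexp, Matrix.trace_mul_comm, ← mul_assoc, hVinv, hstar, one_mul]
  rw [htr, hD, Matrix.exp_diagonal, Matrix.trace_diagonal, Complex.re_sum]
  refine Finset.sum_pos (fun i _ => ?_) Finset.univ_nonempty
  rw [Pi.coe_exp, Function.comp_apply]
  have h1 : (RCLike.ofReal (hA.eigenvalues i) : ℂ) = Complex.ofReal (hA.eigenvalues i) := rfl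
  rw [h1, ← Complex.exp_eq_exp_ℂ, Complex.exp_ofReal_re]
  exact Real.exp_pos _


/-- For Hermitian `m × m` complex matrices `H` and `X`, the function
`C(t) = log Tr(exp (t X - H))` is differentiable with
`C'(t) = Tr(X exp(t X - H)) / Tr(exp(t X - H))`. -/
theorem cumulant_hasDerivAt {m : ℕ} (X H : Matrix (Fin m) (Fin m) ℂ)
    (hX : X.IsHermitian) (hH : H.IsHermitian) (t : ℝ) :
    HasDerivAt
      (fun s : ℝ => Real.log (Matrix.trace (NormedSpace.exp (s • X - H))).re)
      ((Matrix.trace (X * NormedSpace.exp (t • X - H))).re /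
        (Matrix.trace (NormedSpace.exp (t • X - H))).re) t := by
  rcases Nat.eq_zero_or_pos m with rfl | hm
  · have h0 : ∀ M : Matrix (Fin 0) (Fin 0) ℂ, M.trace = 0 := fun M => by
      simp [Matrix.trace]
    simp only [h0, Complex.zero_re, div_zero]
    exact hasDerivAt_const t _
  · haveI : Nonempty (Fin m) := ⟨⟨0, hm⟩⟩
    have hherm : (t • X - H).IsHermitian := by
      have h1 : ((t : ℝ) • X).IsHermitian := by
        show ((t : ℝ) • X)ᴴ = (t : ℝ) • X
        rw [Matrix.conjTranspose_smul, star_trivial, hX.eq]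
      exact h1.sub hH
    have hpos := trace_exp_re_pos (t • X - H) hherm
    have h1 := trace_exp_hasDerivAt X H t
    have h2 := Complex.reCLM.hasFDerivAt.comp_hasDerivAt t h1
    have h3 := h2.log hpos.ne'
    simpa using h3

end main
end

section
/- For Hermitian m×m complex matrices H and X, the cumulant generating function C(t) = log Tr(exp(tX - H)) - log Tr(exp(-H)) is convex on ℝ. -/
open Matrix



section Aux

variable {m : ℕ}

lemma trace_exp_conj (V A : Matrix (Fin m) (Fin m) ℂ)
    (h1 : star V * V = 1) (h2 : V * star V = 1) :
    Matrix.trace (NormedSpace.exp (V * A * star V)) = Matrix.trace (NormedSpace.exp A) := by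
  have hVinv : V⁻¹ = star V := Matrix.inv_eq_left_inv h1
  have hunit : IsUnit V := ⟨⟨V, star V, h2, h1⟩, rfl⟩
  rw [← hVinv, Matrix.exp_conj V A hunit, Matrix.trace_mul_comm, ← Matrix.mul_assoc,
    hVinv, h1, Matrix.one_mul]

/-- trace of exp of Hermitian matrix = sum of exp of eigenvalues. -/
lemma trace_exp_re_eq {M : Matrix (Fin m) (Fin m) ℂ} (hM : M.IsHermitian) :
    (Matrix.trace (NormedSpace.exp M)).re = ∑ i, Real.exp (hM.eigenvalues i) := by
  have key : Matrix.trace (NormedSpace.exp M)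
      = Matrix.trace (NormedSpace.exp (Matrix.diagonal (RCLike.ofReal ∘ hM.eigenvalues))) := by
    conv_lhs => rw [hM.spectral_theorem, Unitary.conjStarAlgAut_apply]
    exact trace_exp_conj _ _ (Unitary.coe_star_mul_self _) (Unitary.coe_mul_star_self _)
  rw [key, Matrix.exp_diagonal, Matrix.trace_diagonal, Complex.re_sum]
  refine Finset.sum_congr rfl fun i _ => ?_
  simp only [Pi.coe_exp, Function.comp_apply]
  rw [← Complex.exp_eq_exp_ℂ]
  exact Complex.exp_ofReal_re _

end Aux

section Peierls
variable {m : ℕ}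

lemma peierls {M : Matrix (Fin m) (Fin m) ℂ} (hM : M.IsHermitian)
    (U : Matrix (Fin m) (Fin m) ℂ) (h1 : star U * U = 1) (h2 : U * star U = 1) :
    ∑ i, Real.exp ((star U * M * U) i i).re ≤ (Matrix.trace (NormedSpace.exp M)).re := by
  classical
  set V : Matrix (Fin m) (Fin m) ℂ := (hM.eigenvectorUnitary : Matrix (Fin m) (Fin m) ℂ) with hV
  have hV1 : star V * V = 1 := Unitary.coe_star_mul_self _
  have hV2 : V * star V = 1 := Unitary.coe_mul_star_self _
  set W : Matrix (Fin m) (Fin m) ℂ := star V * U with hW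
  have hstarW : star W = star U * V := by rw [hW, StarMul.star_mul, star_star]
  have hW1 : star W * W = 1 := by
    rw [hstarW, hW, Matrix.mul_assoc, ← Matrix.mul_assoc V _ _, hV2, Matrix.one_mul, h1]
  have hW2 : W * star W = 1 := by
    rw [hstarW, hW, Matrix.mul_assoc, ← Matrix.mul_assoc U _ _, h2, Matrix.one_mul, hV1]
  have hdiag : star U * M * U
      = star W * Matrix.diagonal (RCLike.ofReal ∘ hM.eigenvalues) * W := by
    conv_lhs => rw [hM.spectral_theorem, Unitary.conjStarAlgAut_apply]
    rw [hstarW, hW, ← hV]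
    simp only [Matrix.mul_assoc]
  set p : Fin m → Fin m → ℝ := fun j i => Complex.normSq (W j i) with hp
  have hentry : ∀ i, ((star U * M * U) i i).re = ∑ j, p j i * hM.eigenvalues j := by
    intro i
    rw [hdiag, Matrix.mul_apply, Complex.re_sum]
    refine Finset.sum_congr rfl fun j _ => ?_
    rw [Matrix.mul_apply]
    rw [Finset.sum_eq_single j (by
      intro b _ hb
      simp [Matrix.diagonal_apply_ne _ hb]) (by simp)]
    simp only [Matrix.star_apply, Matrix.diagonal_apply_eq, Function.comp_apply]
    show (star (W j i) * Complex.ofReal (hM.eigenvalues j) * W j i).re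
        = p j i * hM.eigenvalues j
    rw [show star (W j i) * Complex.ofReal (hM.eigenvalues j) * W j i
        = (hM.eigenvalues j : ℂ) * (W j i * star (W j i)) by ring,
      RCLike.star_def, Complex.mul_conj, ← Complex.ofReal_mul, Complex.ofReal_re]
    exact mul_comm _ _
  have hcol : ∀ i, ∑ j, p j i = 1 := by
    intro i
    have h := congrFun (congrFun hW1 i) i
    rw [Matrix.mul_apply] at h
    have h' := congrArg Complex.re h
    rw [Complex.re_sum] at h'
    simp only [Matrix.one_apply_eq, Complex.one_re] at h'
    rw [← h']
    refine Finset.sum_congr rfl fun j _ => ?_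
    rw [Matrix.star_apply, RCLike.star_def, mul_comm, Complex.mul_conj, Complex.ofReal_re]
  have hrow : ∀ j, ∑ i, p j i = 1 := by
    intro j
    have h := congrFun (congrFun hW2 j) j
    rw [Matrix.mul_apply] at h
    have h' := congrArg Complex.re h
    rw [Complex.re_sum] at h'
    simp only [Matrix.one_apply_eq, Complex.one_re] at h'
    rw [← h']
    refine Finset.sum_congr rfl fun i _ => ?_
    rw [Matrix.star_apply, RCLike.star_def, Complex.mul_conj, Complex.ofReal_re]
  have hjen : ∀ i, Real.exp (∑ j, p j i * hM.eigenvalues j)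
      ≤ ∑ j, p j i * Real.exp (hM.eigenvalues j) := by
    intro i
    have := convexOn_exp.map_sum_le (t := Finset.univ) (w := fun j => p j i)
      (p := fun j => hM.eigenvalues j) (fun j _ => Complex.normSq_nonneg _) (hcol i)
      (fun j _ => Set.mem_univ _)
    simpa [smul_eq_mul] using this
  calc ∑ i, Real.exp ((star U * M * U) i i).re
      = ∑ i, Real.exp (∑ j, p j i * hM.eigenvalues j) := by
        exact Finset.sum_congr rfl fun i _ => by rw [hentry]
    _ ≤ ∑ i, ∑ j, p j i * Real.exp (hM.eigenvalues j) :=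
        Finset.sum_le_sum fun i _ => hjen i
    _ = ∑ j, (∑ i, p j i) * Real.exp (hM.eigenvalues j) := by
        rw [Finset.sum_comm]
        exact Finset.sum_congr rfl fun j _ => by rw [Finset.sum_mul]
    _ = ∑ j, Real.exp (hM.eigenvalues j) := by simp [hrow]
    _ = _ := (trace_exp_re_eq hM).symm

end Peierls

section LSE

lemma lse_ineq {m : ℕ} (hm : 0 < m) (x y : Fin m → ℝ) {a b : ℝ} (ha : 0 < a) (hb : 0 < b)
    (hab : a + b = 1) :
    Real.log (∑ i, Real.exp (a * x i + b * y i))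
      ≤ a * Real.log (∑ i, Real.exp (x i)) + b * Real.log (∑ i, Real.exp (y i)) := by
  haveI : Nonempty (Fin m) := ⟨⟨0, hm⟩⟩
  have ha1 : a < 1 := by linarith
  have hpq : Real.HolderConjugate a⁻¹ b⁻¹ :=
    Real.HolderConjugate.inv_inv ha hb hab
  have hS1 : 0 < ∑ i, Real.exp (x i) :=
    Finset.sum_pos (fun i _ => Real.exp_pos _) Finset.univ_nonempty
  have hS2 : 0 < ∑ i, Real.exp (y i) :=
    Finset.sum_pos (fun i _ => Real.exp_pos _) Finset.univ_nonempty
  have hL : 0 < ∑ i, Real.exp (a * x i + b * y i) :=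
    Finset.sum_pos (fun i _ => Real.exp_pos _) Finset.univ_nonempty
  have h1 : ∑ i, Real.exp (a * x i + b * y i)
      = ∑ i, Real.exp (x i) ^ a * Real.exp (y i) ^ b := by
    refine Finset.sum_congr rfl fun i _ => ?_
    rw [Real.exp_add, mul_comm a, mul_comm b, Real.exp_mul, Real.exp_mul]
  have h2 := Real.inner_le_Lp_mul_Lq_of_nonneg Finset.univ hpq
    (f := fun i => Real.exp (x i) ^ a) (g := fun i => Real.exp (y i) ^ b)
    (fun i _ => Real.rpow_nonneg (Real.exp_pos _).le _)
    (fun i _ => Real.rpow_nonneg (Real.exp_pos _).le _)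
  have h3 : ∀ i, (Real.exp (x i) ^ a) ^ (a⁻¹ : ℝ) = Real.exp (x i) := fun i => by
    rw [← Real.rpow_mul (Real.exp_pos _).le, mul_inv_cancel₀ ha.ne', Real.rpow_one]
  have h4 : ∀ i, (Real.exp (y i) ^ b) ^ (b⁻¹ : ℝ) = Real.exp (y i) := fun i => by
    rw [← Real.rpow_mul (Real.exp_pos _).le, mul_inv_cancel₀ hb.ne', Real.rpow_one]
  simp only [h3, h4, one_div, inv_inv] at h2
  rw [← h1] at h2
  calc Real.log (∑ i, Real.exp (a * x i + b * y i))
      ≤ Real.log ((∑ i, Real.exp (x i)) ^ a * (∑ i, Real.exp (y i)) ^ b) :=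
        Real.log_le_log hL h2
    _ = a * Real.log (∑ i, Real.exp (x i)) + b * Real.log (∑ i, Real.exp (y i)) := by
        rw [Real.log_mul (Real.rpow_pos_of_pos hS1 a).ne' (Real.rpow_pos_of_pos hS2 b).ne',
          Real.log_rpow hS1, Real.log_rpow hS2]

end LSE



/-- For Hermitian `m × m` complex matrices `H` and `X`, the cumulant generating function
`C(t) = log Tr(exp(t X - H)) - log Tr(exp(-H))` is convex on `ℝ`. -/
theorem cumulant_convexOn {m : ℕ} (X H : Matrix (Fin m) (Fin m) ℂ)
    (hX : X.IsHermitian) (hH : H.IsHermitian) :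
    ConvexOn ℝ Set.univ
      (fun t : ℝ =>
        Real.log (Matrix.trace (NormedSpace.exp (t • X - H))).re -
          Real.log (Matrix.trace (NormedSpace.exp (-H))).re) := by
  rcases Nat.eq_zero_or_pos m with hm | hm
  · subst hm
    have hz : ∀ A : Matrix (Fin 0) (Fin 0) ℂ, Matrix.trace A = 0 := fun A => by
      simp [Matrix.trace]
    simp only [hz, Complex.zero_re, Real.log_zero, sub_self]
    exact convexOn_const 0 convex_univ
  · haveI : Nonempty (Fin m) := ⟨⟨0, hm⟩⟩
    have hHer : ∀ r : ℝ, (r • X - H).IsHermitian := fun r => by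
      refine Matrix.IsHermitian.sub ?_ hH
      unfold Matrix.IsHermitian
      rw [Matrix.conjTranspose_smul, hX.eq, star_trivial]
    have key : ConvexOn ℝ Set.univ
        (fun t : ℝ => Real.log (Matrix.trace (NormedSpace.exp (t • X - H))).re) := by
      rw [convexOn_iff_forall_pos]
      refine ⟨convex_univ, ?_⟩
      intro s _ u _ a b ha hb hab
      simp only [smul_eq_mul]
      set t : ℝ := a * s + b * u with ht
      set U : Matrix (Fin m) (Fin m) ℂ := ((hHer t).eigenvectorUnitary : Matrix (Fin m) (Fin m) ℂ)
        with hU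
      have hU1 : star U * U = 1 := Unitary.coe_star_mul_self _
      have hU2 : U * star U = 1 := Unitary.coe_mul_star_self _
      have hsplit : ∀ (r : ℝ) i, ((star U * (r • X - H) * U) i i).re
          = r * ((star U * X * U) i i).re - ((star U * H * U) i i).re := by
        intro r i
        have hmat : star U * (r • X - H) * U = r • (star U * X * U) - star U * H * U := by
          rw [Matrix.mul_sub, Matrix.sub_mul, Matrix.mul_smul, Matrix.smul_mul]
        rw [hmat, Matrix.sub_apply, Matrix.smul_apply, Complex.sub_re, Complex.real_smul,
          Complex.re_ofReal_mul]
      set xf : Fin m → ℝ := fun i => s * ((star U * X * U) i i).re - ((star U * H * U) i i).re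
        with hxf
      set yf : Fin m → ℝ := fun i => u * ((star U * X * U) i i).re - ((star U * H * U) i i).re
        with hyf
      have heig : ∀ i, (hHer t).eigenvalues i = a * xf i + b * yf i := by
        intro i
        have hd := (hHer t).conjStarAlgAut_star_eigenvectorUnitary
        rw [Unitary.conjStarAlgAut_star_apply] at hd
        have he : ((star U * (t • X - H) * U) i i).re = (hHer t).eigenvalues i := by
          rw [← hU] at hd
          rw [hd, Matrix.diagonal_apply_eq]
          exact Complex.ofReal_re _
        rw [← he, hsplit, hxf, hyf, ht]
        simp only
        linear_combination (((star U * H * U) i i).re) * hab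
      have hLHS : (Matrix.trace (NormedSpace.exp (t • X - H))).re
          = ∑ i, Real.exp (a * xf i + b * yf i) := by
        rw [trace_exp_re_eq (hHer t)]
        exact Finset.sum_congr rfl fun i _ => by rw [heig]
      have hxle : ∑ i, Real.exp (xf i) ≤ (Matrix.trace (NormedSpace.exp (s • X - H))).re := by
        have := peierls (hHer s) U hU1 hU2
        refine le_trans (le_of_eq ?_) this
        exact Finset.sum_congr rfl fun i _ => by rw [hsplit]
      have hyle : ∑ i, Real.exp (yf i) ≤ (Matrix.trace (NormedSpace.exp (u • X - H))).re := by
        have := peierls (hHer u) U hU1 hU2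
        refine le_trans (le_of_eq ?_) this
        exact Finset.sum_congr rfl fun i _ => by rw [hsplit]
      have hxpos : 0 < ∑ i, Real.exp (xf i) :=
        Finset.sum_pos (fun i _ => Real.exp_pos _) Finset.univ_nonempty
      have hypos : 0 < ∑ i, Real.exp (yf i) :=
        Finset.sum_pos (fun i _ => Real.exp_pos _) Finset.univ_nonempty
      have step1 := lse_ineq hm xf yf ha hb hab
      have step2 : a * Real.log (∑ i, Real.exp (xf i))
          ≤ a * Real.log (Matrix.trace (NormedSpace.exp (s • X - H))).re :=
        mul_le_mul_of_nonneg_left (Real.log_le_log hxpos hxle) ha.le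
      have step3 : b * Real.log (∑ i, Real.exp (yf i))
          ≤ b * Real.log (Matrix.trace (NormedSpace.exp (u • X - H))).re :=
        mul_le_mul_of_nonneg_left (Real.log_le_log hypos hyle) hb.le
      refine le_trans ?_ (add_le_add step2 step3)
      rw [hLHS]
      exact step1
    exact key.sub (concaveOn_const _ convex_univ)
end

section
/- The Bogoliubov inner product ⟨A,B⟩ = (1/Z) ∫₀¹ Tr(A* exp(sK) B exp((1-s)K)) ds, where K = tX - H is Hermitian and Z = Tr(exp(K)), defines a positive semidefinite sesquilinear form on M_m(ℂ); in particular ⟨A,A⟩ ≥ 0 for every A. -/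
open Matrix

/-- The Bogoliubov form `⟨A, B⟩ = Z⁻¹ ∫₀¹ Tr(A* exp(sK) B exp((1-s)K)) ds`
associated with a Hermitian matrix `K`, where `Z = Tr (exp K)`. -/
noncomputable def bogoliubov {m : ℕ} (K : Matrix (Fin m) (Fin m) ℂ)
    (A B : Matrix (Fin m) (Fin m) ℂ) : ℂ :=
  ((Matrix.trace (NormedSpace.exp K)).re : ℂ)⁻¹ *
    ∫ s in (0:ℝ)..1,
      Matrix.trace (Aᴴ * NormedSpace.exp (s • K) * B * NormedSpace.exp ((1 - s) • K))

namespace BogoliubovAux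

variable {m : ℕ}

/-- The integrand of the Bogoliubov form. -/
noncomputable def bogIntegrand (K A B : Matrix (Fin m) (Fin m) ℂ) (s : ℝ) : ℂ :=
  Matrix.trace (Aᴴ * NormedSpace.exp (s • K) * B * NormedSpace.exp ((1 - s) • K))

lemma bogoliubov_def (K A B : Matrix (Fin m) (Fin m) ℂ) :
    bogoliubov K A B = ((Matrix.trace (NormedSpace.exp K)).re : ℂ)⁻¹ *
      ∫ s in (0:ℝ)..1, bogIntegrand K A B s := rfl

lemma exp_real_smul {K : Matrix (Fin m) (Fin m) ℂ} (hK : K.IsHermitian) (s : ℝ) :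
    NormedSpace.exp (s • K) = (hK.eigenvectorUnitary : Matrix (Fin m) (Fin m) ℂ) *
      diagonal (fun i => Complex.exp (s * hK.eigenvalues i)) *
      ((hK.eigenvectorUnitary : Matrix (Fin m) (Fin m) ℂ))ᴴ := by
  set V := (hK.eigenvectorUnitary : Matrix (Fin m) (Fin m) ℂ) with hV
  have hVu : IsUnit V := ⟨⟨V, Vᴴ, Unitary.coe_mul_star_self _, Unitary.coe_star_mul_self _⟩, rfl⟩
  have hVinv : V⁻¹ = Vᴴ := Matrix.inv_eq_left_inv (Unitary.coe_star_mul_self _)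
  have hd : s • (diagonal (RCLike.ofReal ∘ hK.eigenvalues) : Matrix (Fin m) (Fin m) ℂ)
      = diagonal (fun i => ((s * hK.eigenvalues i : ℝ) : ℂ)) := by
    ext i j
    by_cases h : i = j <;>
      simp [h, Matrix.diagonal_apply, Complex.real_smul, Complex.ofReal_mul]
  have h1 : s • K = V * diagonal (fun i => ((s * hK.eigenvalues i : ℝ) : ℂ)) * V⁻¹ := by
    rw [hVinv]
    conv_lhs => rw [hK.spectral_theorem, Unitary.conjStarAlgAut_apply]
    rw [← Matrix.smul_mul, ← Matrix.mul_smul, ← Matrix.star_eq_conjTranspose, hd]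
  rw [h1, Matrix.exp_conj V _ hVu, Matrix.exp_diagonal, hVinv]
  congr 2
  rw [Pi.exp_def]
  funext i
  simp [← Complex.exp_eq_exp_ℂ, Complex.ofReal_mul]

lemma trace_conj_diag (V A B : Matrix (Fin m) (Fin m) ℂ) (hV1 : Vᴴ * V = 1) (hV2 : V * Vᴴ = 1)
    (d e : Fin m → ℂ) :
    Matrix.trace (Aᴴ * (V * diagonal d * Vᴴ) * B * (V * diagonal e * Vᴴ)) =
      ∑ i, ∑ j, (star ((Vᴴ * A * V) j i) * ((Vᴴ * B * V) j i)) * (d j * e i) := by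
  have hcan1 : ∀ X : Matrix (Fin m) (Fin m) ℂ, V * (Vᴴ * X) = X := fun X => by
    rw [← Matrix.mul_assoc, hV2, Matrix.one_mul]
  have hcan2 : ∀ X : Matrix (Fin m) (Fin m) ℂ, Vᴴ * (V * X) = X := fun X => by
    rw [← Matrix.mul_assoc, hV1, Matrix.one_mul]
  have key : Aᴴ * (V * diagonal d * Vᴴ) * B * (V * diagonal e * Vᴴ)
      = V * ((Vᴴ * A * V)ᴴ * diagonal d * (Vᴴ * B * V) * diagonal e) * Vᴴ := by
    simp only [conjTranspose_mul, conjTranspose_conjTranspose, Matrix.mul_assoc, hcan1, hcan2]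
  rw [key, Matrix.trace_mul_cycle, hV1, Matrix.one_mul]
  set P := Vᴴ * A * V with hP
  set Q := Vᴴ * B * V with hQ
  clear_value P Q
  rw [Matrix.trace]
  simp only [Matrix.diag_apply, Matrix.mul_diagonal, Matrix.mul_apply,
    Matrix.conjTranspose_apply, Finset.sum_mul, Matrix.diagonal_apply, mul_ite, ite_mul,
    zero_mul, mul_zero, Finset.sum_ite_eq, Finset.sum_ite_eq', Finset.mem_univ, if_true]
  refine Finset.sum_congr rfl fun i _ => Finset.sum_congr rfl fun j _ => ?_
  ring

lemma bogIntegrand_eq {K : Matrix (Fin m) (Fin m) ℂ} (hK : K.IsHermitian)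
    (A B : Matrix (Fin m) (Fin m) ℂ) (s : ℝ) :
    bogIntegrand K A B s =
      ∑ i, ∑ j,
        (star (((hK.eigenvectorUnitary : Matrix (Fin m) (Fin m) ℂ)ᴴ * A *
              (hK.eigenvectorUnitary : Matrix (Fin m) (Fin m) ℂ)) j i) *
          (((hK.eigenvectorUnitary : Matrix (Fin m) (Fin m) ℂ)ᴴ * B *
              (hK.eigenvectorUnitary : Matrix (Fin m) (Fin m) ℂ)) j i)) *
        (Complex.exp (s * hK.eigenvalues j) * Complex.exp (((1 - s : ℝ) : ℂ) * hK.eigenvalues i)) := by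
  rw [bogIntegrand, exp_real_smul hK s, exp_real_smul hK (1 - s),
    trace_conj_diag _ A B (Unitary.coe_star_mul_self _) (Unitary.coe_mul_star_self _)]

lemma bogIntegrand_continuous {K : Matrix (Fin m) (Fin m) ℂ} (hK : K.IsHermitian)
    (A B : Matrix (Fin m) (Fin m) ℂ) : Continuous (bogIntegrand K A B) := by
  have : bogIntegrand K A B = fun s : ℝ =>
      ∑ i, ∑ j,
        (star (((hK.eigenvectorUnitary : Matrix (Fin m) (Fin m) ℂ)ᴴ * A *
              (hK.eigenvectorUnitary : Matrix (Fin m) (Fin m) ℂ)) j i) *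
          (((hK.eigenvectorUnitary : Matrix (Fin m) (Fin m) ℂ)ᴴ * B *
              (hK.eigenvectorUnitary : Matrix (Fin m) (Fin m) ℂ)) j i)) *
        (Complex.exp (s * hK.eigenvalues j) * Complex.exp (((1 - s : ℝ) : ℂ) * hK.eigenvalues i)) :=
    funext (bogIntegrand_eq hK A B)
  rw [this]
  refine continuous_finset_sum _ fun i _ => continuous_finset_sum _ fun j _ => ?_
  refine continuous_const.mul (Continuous.mul ?_ ?_) <;> fun_prop

lemma bogIntegrand_intervalIntegrable {K : Matrix (Fin m) (Fin m) ℂ} (hK : K.IsHermitian)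
    (A B : Matrix (Fin m) (Fin m) ℂ) :
    IntervalIntegrable (bogIntegrand K A B) MeasureTheory.volume 0 1 :=
  (bogIntegrand_continuous hK A B).intervalIntegrable 0 1

end BogoliubovAux

open BogoliubovAux in
/-- The Bogoliubov inner product is a positive semidefinite sesquilinear form on `M_m(ℂ)`:
it is additive in both arguments, conjugate-homogeneous in the first argument, homogeneous in
the second argument, and in particular `⟨A, A⟩ ≥ 0` (it is real and nonnegative) for every `A`. -/
theorem bogoliubov_sesquilinear_posSemidef {m : ℕ} (K : Matrix (Fin m) (Fin m) ℂ)
    (hK : K.IsHermitian) (hZ : 0 < (Matrix.trace (NormedSpace.exp K)).re) :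
    (∀ A B C : Matrix (Fin m) (Fin m) ℂ,
        bogoliubov K (A + B) C = bogoliubov K A C + bogoliubov K B C) ∧
    (∀ (c : ℂ) (A B : Matrix (Fin m) (Fin m) ℂ),
        bogoliubov K (c • A) B = star c * bogoliubov K A B) ∧
    (∀ A B C : Matrix (Fin m) (Fin m) ℂ,
        bogoliubov K A (B + C) = bogoliubov K A B + bogoliubov K A C) ∧
    (∀ (c : ℂ) (A B : Matrix (Fin m) (Fin m) ℂ),
        bogoliubov K A (c • B) = c * bogoliubov K A B) ∧
    (∀ A B : Matrix (Fin m) (Fin m) ℂ, bogoliubov K A B = star (bogoliubov K B A)) ∧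
    (∀ A : Matrix (Fin m) (Fin m) ℂ,
        (bogoliubov K A A).im = 0 ∧ 0 ≤ (bogoliubov K A A).re) := by
  have hint := fun A B => bogIntegrand_intervalIntegrable hK A B
  refine ⟨?_, ?_, ?_, ?_, ?_, ?_⟩
  · intro A B C
    have h : ∀ s : ℝ, bogIntegrand K (A + B) C s
        = bogIntegrand K A C s + bogIntegrand K B C s := by
      intro s
      simp [bogIntegrand, Matrix.conjTranspose_add, Matrix.add_mul, Matrix.trace_add]
    rw [bogoliubov_def, bogoliubov_def, bogoliubov_def,
      intervalIntegral.integral_congr (g := fun s => bogIntegrand K A C s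
        + bogIntegrand K B C s) (fun s _ => h s),
      intervalIntegral.integral_add (hint A C) (hint B C), mul_add]
  · intro c A B
    have h : ∀ s : ℝ, bogIntegrand K (c • A) B s = star c * bogIntegrand K A B s := by
      intro s
      simp [bogIntegrand, Matrix.conjTranspose_smul, Matrix.smul_mul, Matrix.trace_smul,
        smul_eq_mul]
    rw [bogoliubov_def, bogoliubov_def,
      intervalIntegral.integral_congr (g := fun s => star c * bogIntegrand K A B s)
        (fun s _ => h s),
      intervalIntegral.integral_const_mul]
    ring
  · intro A B C
    have h : ∀ s : ℝ, bogIntegrand K A (B + C) s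
        = bogIntegrand K A B s + bogIntegrand K A C s := by
      intro s
      simp [bogIntegrand, Matrix.mul_add, Matrix.add_mul, Matrix.trace_add]
    rw [bogoliubov_def, bogoliubov_def, bogoliubov_def,
      intervalIntegral.integral_congr (g := fun s => bogIntegrand K A B s
        + bogIntegrand K A C s) (fun s _ => h s),
      intervalIntegral.integral_add (hint A B) (hint A C), mul_add]
  · intro c A B
    have h : ∀ s : ℝ, bogIntegrand K A (c • B) s = c * bogIntegrand K A B s := by
      intro s
      simp [bogIntegrand, Matrix.mul_smul, Matrix.smul_mul, Matrix.trace_smul, smul_eq_mul]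
    rw [bogoliubov_def, bogoliubov_def,
      intervalIntegral.integral_congr (g := fun s => c * bogIntegrand K A B s)
        (fun s _ => h s),
      intervalIntegral.integral_const_mul]
    ring
  · intro A B
    have hE : ∀ s : ℝ, (NormedSpace.exp (s • K))ᴴ = NormedSpace.exp (s • K) := by
      intro s
      rw [← Matrix.exp_conjTranspose]
      congr 1
      ext i j
      simp only [Matrix.conjTranspose_apply, Matrix.smul_apply, star_smul, star_trivial]
      rw [hK.apply i j]
    have h : ∀ s : ℝ, bogIntegrand K A B s = star (bogIntegrand K B A s) := by
      intro s
      rw [bogIntegrand, bogIntegrand, ← Matrix.trace_conjTranspose]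
      simp only [Matrix.conjTranspose_mul, Matrix.conjTranspose_conjTranspose, hE]
      rw [Matrix.trace_mul_comm]
      congr 1
      simp only [Matrix.mul_assoc]
    have hconj : ∀ f : ℝ → ℂ, (∫ s in (0:ℝ)..1, (starRingEnd ℂ) (f s))
        = (starRingEnd ℂ) (∫ s in (0:ℝ)..1, f s) := by
      intro f
      simp only [intervalIntegral, _root_.integral_conj, map_sub]
    rw [bogoliubov_def, bogoliubov_def,
      intervalIntegral.integral_congr
        (g := fun s => (starRingEnd ℂ) (bogIntegrand K B A s)) (fun s _ => h s),
      hconj]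
    rw [star_mul']
    congr 1
    simp [Complex.star_def, map_inv₀, Complex.conj_ofReal]
  · intro A
    set V := (hK.eigenvectorUnitary : Matrix (Fin m) (Fin m) ℂ) with hV
    set g : ℝ → ℝ := fun s => ∑ i, ∑ j, Complex.normSq ((Vᴴ * A * V) j i) *
      (Real.exp (s * hK.eigenvalues j) * Real.exp ((1 - s) * hK.eigenvalues i)) with hg
    have h : ∀ s : ℝ, bogIntegrand K A A s = ((g s : ℝ) : ℂ) := by
      intro s
      rw [bogIntegrand_eq hK A A s, hg]
      push_cast
      refine Finset.sum_congr rfl fun i _ => Finset.sum_congr rfl fun j _ => ?_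
      congr 1
      rw [Complex.normSq_eq_conj_mul_self, Complex.star_def]
    have key : bogoliubov K A A =
        (((Matrix.trace (NormedSpace.exp K)).re⁻¹ * ∫ s in (0:ℝ)..1, g s : ℝ) : ℂ) := by
      rw [bogoliubov_def,
        intervalIntegral.integral_congr (g := fun s => ((g s : ℝ) : ℂ)) (fun s _ => h s),
        intervalIntegral.integral_ofReal]
      push_cast
      ring
    constructor
    · rw [key, Complex.ofReal_im]
    · rw [key, Complex.ofReal_re]
      refine mul_nonneg (inv_nonneg.mpr hZ.le) ?_
      refine intervalIntegral.integral_nonneg zero_le_one fun u _ => ?_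
      refine Finset.sum_nonneg fun i _ => Finset.sum_nonneg fun j _ => ?_
      exact mul_nonneg (Complex.normSq_nonneg _) (by positivity)
end

section
/- For any two states φ, ρ on M_m(ℂ) with density matrices D_φ, D_ρ (with D_ρ invertible), the quantum relative entropy S(φ‖ρ) = Tr(D_φ log D_φ) - Tr(D_φ log D_ρ) is nonnegative. -/
open Matrix
open scoped ComplexOrder

lemma trace_diag_mul_diag {n : ℕ} (d e : Fin n → ℂ) (M : Matrix (Fin n) (Fin n) ℂ) :
    Matrix.trace (diagonal d * M * diagonal e * Mᴴ) =
      ∑ i, ∑ j, d i * e j * (M i j * star (M i j)) := by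
  simp only [Matrix.trace, Matrix.diag, Matrix.mul_apply, diagonal_apply, conjTranspose_apply,
    ite_mul, mul_ite, zero_mul, mul_zero, Finset.sum_ite_eq, Finset.sum_ite_eq',
    Finset.mem_univ, if_true, Finset.sum_mul, Finset.mul_sum]
  refine Finset.sum_congr rfl fun i _ => Finset.sum_congr rfl fun j _ => by ring

lemma trace_mul_cfc' {n : ℕ} {A B : Matrix (Fin n) (Fin n) ℂ} (hA : A.IsHermitian)
    (hB : B.IsHermitian) (f : ℝ → ℝ) :
    Matrix.trace (A * hB.cfc f) =
      ∑ i, ∑ j, ((RCLike.ofReal ∘ hA.eigenvalues) i * (RCLike.ofReal ∘ f ∘ hB.eigenvalues) j) *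
        ((star (hA.eigenvectorUnitary : Matrix (Fin n) (Fin n) ℂ) *
            (hB.eigenvectorUnitary : Matrix (Fin n) (Fin n) ℂ)) i j *
         star ((star (hA.eigenvectorUnitary : Matrix (Fin n) (Fin n) ℂ) *
            (hB.eigenvectorUnitary : Matrix (Fin n) (Fin n) ℂ)) i j)) := by
  set U := (hA.eigenvectorUnitary : Matrix (Fin n) (Fin n) ℂ) with hUdef
  set V := (hB.eigenvectorUnitary : Matrix (Fin n) (Fin n) ℂ) with hVdef
  rw [← trace_diag_mul_diag]
  conv_lhs => rw [hA.spectral_theorem, Matrix.IsHermitian.cfc, Unitary.conjStarAlgAut_apply,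
    Unitary.conjStarAlgAut_apply]
  rw [Matrix.mul_assoc (U * diagonal (RCLike.ofReal ∘ hA.eigenvalues)) (star U),
    Matrix.mul_assoc U (diagonal (RCLike.ofReal ∘ hA.eigenvalues)),
    Matrix.trace_mul_comm U]
  congr 1
  simp only [Matrix.star_eq_conjTranspose, conjTranspose_mul, conjTranspose_conjTranspose,
    Matrix.mul_assoc]
  rfl


/-- The matrix logarithm of a Hermitian matrix, via the functional calculus
(junk value `0` for non-Hermitian matrices). -/
noncomputable def matLog {m : ℕ} (A : Matrix (Fin m) (Fin m) ℂ) : Matrix (Fin m) (Fin m) ℂ :=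
  if hA : A.IsHermitian then hA.cfc Real.log else 0

/-- The quantum relative entropy `S(φ‖ρ) = Tr(D_φ log D_φ) - Tr(D_φ log D_ρ)` of two
density matrices. -/
noncomputable def relEnt {m : ℕ} (Dφ Dρ : Matrix (Fin m) (Fin m) ℂ) : ℝ :=
  (Matrix.trace (Dφ * matLog Dφ) - Matrix.trace (Dφ * matLog Dρ)).re

/-- For any two states `φ, ρ` on `M_m(ℂ)` with density matrices `D_φ, D_ρ`
(`D_ρ` positive definite), the quantum relative entropy is nonnegative. -/
theorem relEnt_nonneg {m : ℕ} (Dφ Dρ : Matrix (Fin m) (Fin m) ℂ)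
    (hφ : Dφ.PosSemidef) (hφ1 : Matrix.trace Dφ = 1)
    (hρ : Dρ.PosDef) (hρ1 : Matrix.trace Dρ = 1) :
    0 ≤ relEnt Dφ Dρ := by
  have hφH : Dφ.IsHermitian := hφ.1
  have hρH : Dρ.IsHermitian := hρ.1
  set p : Fin m → ℝ := hφH.eigenvalues with hpdef
  set q : Fin m → ℝ := hρH.eigenvalues with hqdef
  set U := (hφH.eigenvectorUnitary : Matrix (Fin m) (Fin m) ℂ) with hUdef
  set V := (hρH.eigenvectorUnitary : Matrix (Fin m) (Fin m) ℂ) with hVdef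
  set W : Matrix (Fin m) (Fin m) ℂ := star U * V with hWdef
  set c : Fin m → Fin m → ℝ := fun i j => Complex.normSq (W i j) with hcdef
  have hp : ∀ i, 0 ≤ p i := hφ.eigenvalues_nonneg
  have hq : ∀ j, 0 < q j := hρ.eigenvalues_pos
  have hc : ∀ i j, 0 ≤ c i j := fun i j => Complex.normSq_nonneg _
  -- sums of eigenvalues are 1
  have traceEig : ∀ (A : Matrix (Fin m) (Fin m) ℂ) (hA : A.IsHermitian),
      Matrix.trace A = ∑ i, (hA.eigenvalues i : ℂ) := by
    intro A hA
    conv_lhs => rw [hA.spectral_theorem, Unitary.conjStarAlgAut_apply]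
    rw [Matrix.trace_mul_cycle, Matrix.UnitaryGroup.star_mul_self, one_mul, trace_diagonal]
    rfl
  have hps : ∑ i, p i = 1 := by
    have := traceEig Dφ hφH
    rw [hφ1] at this
    exact_mod_cast this.symm
  have hqs : ∑ j, q j = 1 := by
    have := traceEig Dρ hρH
    rw [hρ1] at this
    exact_mod_cast this.symm
  -- W is unitary: row and column sums of c are 1
  have hWW : W * star W = 1 := by
    rw [hWdef, Matrix.star_mul, star_star, Matrix.mul_assoc, ← Matrix.mul_assoc V,
      mem_unitaryGroup_iff.mp (hρH.eigenvectorUnitary).2, one_mul,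
      Matrix.UnitaryGroup.star_mul_self]
  have hWW' : star W * W = 1 := by
    rw [hWdef, Matrix.star_mul, star_star, Matrix.mul_assoc, ← Matrix.mul_assoc U,
      mem_unitaryGroup_iff.mp (hφH.eigenvectorUnitary).2, one_mul,
      Matrix.UnitaryGroup.star_mul_self]
  have hrow : ∀ i, ∑ j, c i j = 1 := by
    intro i
    have h1 : (W * star W) i i = 1 := by rw [hWW, Matrix.one_apply_eq]
    rw [Matrix.mul_apply] at h1
    have h2 : ∀ j, W i j * (star W) j i = ((c i j : ℝ) : ℂ) := by
      intro j
      rw [Matrix.star_eq_conjTranspose, conjTranspose_apply, hcdef]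
      exact Complex.mul_conj _
    rw [Finset.sum_congr rfl fun j _ => h2 j] at h1
    exact_mod_cast h1
  have hcol : ∀ j, ∑ i, c i j = 1 := by
    intro j
    have h1 : (star W * W) j j = 1 := by rw [hWW', Matrix.one_apply_eq]
    rw [Matrix.mul_apply] at h1
    have h2 : ∀ i, (star W) j i * W i j = ((c i j : ℝ) : ℂ) := by
      intro i
      rw [Matrix.star_eq_conjTranspose, conjTranspose_apply, hcdef, mul_comm]
      exact Complex.mul_conj _
    rw [Finset.sum_congr rfl fun i _ => h2 i] at h1
    exact_mod_cast h1
  -- compute the two traces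
  have e2 : Matrix.trace (Dφ * matLog Dρ) =
      ((∑ i, ∑ j, p i * Real.log (q j) * c i j : ℝ) : ℂ) := by
    have cast1 : ∀ x : ℝ, (RCLike.ofReal x : ℂ) = (x : ℂ) := fun _ => rfl
    rw [matLog, dif_pos hρH, trace_mul_cfc' hφH hρH]
    push_cast
    refine Finset.sum_congr rfl fun i _ => Finset.sum_congr rfl fun j _ => ?_
    have hthis : W i j * star (W i j) = ((c i j : ℝ) : ℂ) := Complex.mul_conj _
    rw [hthis]
    simp only [Function.comp_apply, cast1]
    try ring
  have e1 : Matrix.trace (Dφ * matLog Dφ) =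
      ((∑ i, p i * Real.log (p i) : ℝ) : ℂ) := by
    have cast1 : ∀ x : ℝ, (RCLike.ofReal x : ℂ) = (x : ℂ) := fun _ => rfl
    rw [matLog, dif_pos hφH, trace_mul_cfc' hφH hφH]
    have hUU : star U * U = 1 := Matrix.UnitaryGroup.star_mul_self _
    rw [show (star U * U) = (1 : Matrix (Fin m) (Fin m) ℂ) from hUU]
    push_cast
    simp only [Function.comp_apply, cast1, Matrix.one_apply, apply_ite, star_one, star_zero,
      mul_ite, mul_one, mul_zero, ite_mul, zero_mul, if_pos, ite_self, Finset.sum_ite_eq,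
      Finset.sum_ite_eq', Finset.mem_univ, if_true]
    rfl
  rw [relEnt, e1, e2]
  rw [show ((∑ i, p i * Real.log (p i) : ℝ) : ℂ) - ((∑ i, ∑ j, p i * Real.log (q j) * c i j : ℝ) : ℂ)
      = (((∑ i, p i * Real.log (p i)) - (∑ i, ∑ j, p i * Real.log (q j) * c i j) : ℝ) : ℂ) by
    push_cast; ring]
  rw [Complex.ofReal_re, sub_nonneg]
  -- classical Klein inequality
  have hS1 : ∑ i, p i * Real.log (p i) = ∑ i, ∑ j, c i j * (p i * Real.log (p i)) := by
    refine Finset.sum_congr rfl fun i _ => ?_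
    rw [← Finset.sum_mul, hrow, one_mul]
  calc ∑ i, ∑ j, p i * Real.log (q j) * c i j
      = ∑ i, ∑ j, (c i j * (p i * Real.log (p i)) - c i j * (p i * Real.log (p i) - p i * Real.log (q j))) := by
        refine Finset.sum_congr rfl fun i _ => Finset.sum_congr rfl fun j _ => by ring
    _ ≤ ∑ i, ∑ j, (c i j * (p i * Real.log (p i)) - c i j * (p i - q j)) := by
        refine Finset.sum_le_sum fun i _ => Finset.sum_le_sum fun j _ => ?_
        have key : c i j * (p i - q j) ≤ c i j * (p i * Real.log (p i) - p i * Real.log (q j)) := by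
          rcases eq_or_lt_of_le (hp i) with h0 | h0
          · rw [← h0]
            simp only [Real.log_zero, zero_mul, mul_zero, sub_zero, zero_sub, mul_zero]
            exact mul_nonpos_of_nonneg_of_nonpos (hc i j) (neg_nonpos.mpr (hq j).le)
          · refine mul_le_mul_of_nonneg_left ?_ (hc i j)
            have hlog : Real.log (q j) - Real.log (p i) ≤ q j / p i - 1 := by
              have := Real.log_le_sub_one_of_pos (div_pos (hq j) h0)
              rwa [Real.log_div (hq j).ne' h0.ne'] at this
            have h2 := mul_le_mul_of_nonneg_left hlog h0.le
            have h3 : p i * (q j / p i - 1) = q j - p i := by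
              field_simp
            rw [h3, mul_sub] at h2
            linarith
        linarith
    _ = ∑ i, ∑ j, c i j * (p i * Real.log (p i)) - ∑ i, ∑ j, c i j * (p i - q j) := by
        rw [← Finset.sum_sub_distrib]
        exact Finset.sum_congr rfl fun i _ => Finset.sum_sub_distrib _ _
    _ = ∑ i, p i * Real.log (p i) := by
        rw [← hS1]
        have hz : ∑ i, ∑ j, c i j * (p i - q j) = 0 := by
          have ha : ∑ i, ∑ j, c i j * p i = 1 := by
            rw [show ∑ i, ∑ j, c i j * p i = ∑ i, (∑ j, c i j) * p i from
              Finset.sum_congr rfl fun i _ => (Finset.sum_mul _ _ _).symm]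
            simp only [hrow, one_mul]
            exact hps
          have hb : ∑ i, ∑ j, c i j * q j = 1 := by
            rw [Finset.sum_comm]
            rw [show ∑ j, ∑ i, c i j * q j = ∑ j, (∑ i, c i j) * q j from
              Finset.sum_congr rfl fun j _ => (Finset.sum_mul _ _ _).symm]
            simp only [hcol, one_mul]
            exact hqs
          have : ∑ i, ∑ j, c i j * (p i - q j)
              = ∑ i, ∑ j, (c i j * p i - c i j * q j) := by
            refine Finset.sum_congr rfl fun i _ => Finset.sum_congr rfl fun j _ => by ring
          rw [this]
          rw [show ∑ i, ∑ j, (c i j * p i - c i j * q j)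
            = ∑ i, ∑ j, c i j * p i - ∑ i, ∑ j, c i j * q j by
            rw [← Finset.sum_sub_distrib]
            exact Finset.sum_congr rfl fun i _ => Finset.sum_sub_distrib _ _]
          rw [ha, hb, sub_self]
        rw [hz, sub_zero]
end

section
/- The quantum relative entropy S(φ‖ρ) = Tr(D_φ log D_φ - D_φ log D_ρ) is jointly convex: for density matrices D_{φ_1}, D_{φ_2}, D_{ρ_1}, D_{ρ_2} (with D_{ρ_i} positive definite) and λ ∈ [0,1], S(λφ_1+(1-λ)φ_2 ‖ λρ_1+(1-λ)ρ_2) ≤ λ S(φ_1‖ρ_1) + (1-λ) S(φ_2‖ρ_2). -/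
open Matrix MeasureTheory Set Filter
open scoped ComplexOrder Topology

namespace RelEntAux

variable {m : ℕ}

/-- eigenvector unitary as a bare matrix -/
noncomputable def eU {A : Matrix (Fin m) (Fin m) ℂ} (hA : A.IsHermitian) :
    Matrix (Fin m) (Fin m) ℂ := hA.eigenvectorUnitary

noncomputable def ev {A : Matrix (Fin m) (Fin m) ℂ} (hA : A.IsHermitian) : Fin m → ℝ :=
  hA.eigenvalues

lemma eU_star_mul {A : Matrix (Fin m) (Fin m) ℂ} (hA : A.IsHermitian) :
    star (eU hA) * eU hA = 1 := by
  simpa [eU] using unitary.coe_star_mul_self hA.eigenvectorUnitary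

lemma eU_mul_star {A : Matrix (Fin m) (Fin m) ℂ} (hA : A.IsHermitian) :
    eU hA * star (eU hA) = 1 := by
  simpa [eU] using unitary.coe_mul_star_self hA.eigenvectorUnitary

/-- the overlap unitary `U_A† U_B` -/
noncomputable def ovM {A B : Matrix (Fin m) (Fin m) ℂ} (hA : A.IsHermitian)
    (hB : B.IsHermitian) : Matrix (Fin m) (Fin m) ℂ := star (eU hA) * eU hB

/-- overlap coefficients `|⟨u_i, v_j⟩|²` -/
noncomputable def ov {A B : Matrix (Fin m) (Fin m) ℂ} (hA : A.IsHermitian)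
    (hB : B.IsHermitian) (i j : Fin m) : ℝ := Complex.normSq (ovM hA hB i j)

lemma ov_nonneg {A B : Matrix (Fin m) (Fin m) ℂ} (hA : A.IsHermitian)
    (hB : B.IsHermitian) (i j : Fin m) : 0 ≤ ov hA hB i j := Complex.normSq_nonneg _


lemma spectral {A : Matrix (Fin m) (Fin m) ℂ} (hA : A.IsHermitian) :
    A = eU hA * diagonal (fun i => (ev hA i : ℂ)) * star (eU hA) := by
  simpa [eU, ev, Function.comp_def] using hA.spectral_theorem

lemma conj_spectral {A : Matrix (Fin m) (Fin m) ℂ} (hA : A.IsHermitian) :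
    star (eU hA) * A * eU hA = diagonal (fun i => (ev hA i : ℂ)) := by
  have h := congrArg (fun X => star (eU hA) * X * eU hA) (spectral hA)
  rw [h]
  simp only [Matrix.mul_assoc, eU_star_mul hA, Matrix.mul_one]
  rw [← Matrix.mul_assoc, eU_star_mul hA, Matrix.one_mul]

lemma trace_conj_unitary {U X : Matrix (Fin m) (Fin m) ℂ} (hU : star U * U = 1) :
    Matrix.trace (U * X * star U) = Matrix.trace X := by
  rw [Matrix.trace_mul_comm (U * X) (star U), ← Matrix.mul_assoc, hU, Matrix.one_mul]

lemma trace_diag_conj (d e : Fin m → ℂ) (M : Matrix (Fin m) (Fin m) ℂ) :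
    Matrix.trace (diagonal d * M * diagonal e * star M) =
      ∑ i, ∑ j, d i * e j * (M i j * star (M i j)) := by
  rw [Matrix.trace]
  refine Finset.sum_congr rfl fun i _ => ?_
  rw [Matrix.diag]
  rw [Matrix.mul_apply]
  refine Finset.sum_congr rfl fun j _ => ?_
  simp only [Matrix.mul_diagonal, Matrix.diagonal_mul, Matrix.star_apply]
  ring

/-- the fundamental pairing `∑ᵢⱼ cᵢⱼ k(pᵢ, qⱼ)` -/
noncomputable def pair {A B : Matrix (Fin m) (Fin m) ℂ} (hA : A.IsHermitian)
    (hB : B.IsHermitian) (k : ℝ → ℝ → ℝ) : ℝ :=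
  ∑ i, ∑ j, ov hA hB i j * k (ev hA i) (ev hB j)

lemma ovM_mul_star {A B : Matrix (Fin m) (Fin m) ℂ} (hA : A.IsHermitian)
    (hB : B.IsHermitian) : ovM hA hB * star (ovM hA hB) = 1 := by
  rw [ovM, StarMul.star_mul, star_star, Matrix.mul_assoc, ← Matrix.mul_assoc (eU hB),
    eU_mul_star hB, Matrix.one_mul, eU_star_mul hA]

lemma ov_row_sum {A B : Matrix (Fin m) (Fin m) ℂ} (hA : A.IsHermitian)
    (hB : B.IsHermitian) (i : Fin m) : ∑ j, ov hA hB i j = 1 := by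
  have h2 : ∑ j, ovM hA hB i j * star (ovM hA hB i j) = 1 := by
    have := congrFun (congrFun (ovM_mul_star hA hB) i) i
    rw [Matrix.mul_apply] at this
    simp only [Matrix.star_apply] at this
    rw [this, Matrix.one_apply_eq]
  have h3 := congrArg Complex.re h2
  rw [Complex.re_sum] at h3
  simpa [ov, Complex.mul_conj] using h3

lemma ovM_self {A : Matrix (Fin m) (Fin m) ℂ} (hA : A.IsHermitian) :
    ovM hA hA = 1 := eU_star_mul hA

/-- trace of a product of two spectral functions -/
lemma trace_cfc_mul_cfc {A B : Matrix (Fin m) (Fin m) ℂ} (hA : A.IsHermitian)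
    (hB : B.IsHermitian) (f g : ℝ → ℝ) :
    Matrix.trace (hA.cfc f * hB.cfc g) =
      ((pair hA hB fun p q => f p * g q : ℝ) : ℂ) := by
  have hcfcA : hA.cfc f = eU hA * diagonal (fun i => ((f (ev hA i) : ℝ) : ℂ)) * star (eU hA) :=
    rfl
  have hcfcB : hB.cfc g = eU hB * diagonal (fun j => ((g (ev hB j) : ℝ) : ℂ)) * star (eU hB) :=
    rfl
  rw [hcfcA, hcfcB]
  have key : eU hA * diagonal (fun i => ((f (ev hA i) : ℝ) : ℂ)) * star (eU hA) *
      (eU hB * diagonal (fun j => ((g (ev hB j) : ℝ) : ℂ)) * star (eU hB)) =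
      eU hA * (diagonal (fun i => ((f (ev hA i) : ℝ) : ℂ)) * ovM hA hB *
        diagonal (fun j => ((g (ev hB j) : ℝ) : ℂ)) * star (ovM hA hB)) * star (eU hA) := by
    rw [ovM, StarMul.star_mul, star_star]
    simp only [Matrix.mul_assoc, eU_mul_star hB, eU_mul_star hA, Matrix.mul_one]
  rw [key, trace_conj_unitary (eU_star_mul hA), trace_diag_conj, pair]
  rw [Complex.ofReal_sum]
  refine Finset.sum_congr rfl fun i _ => ?_
  rw [Complex.ofReal_sum]
  refine Finset.sum_congr rfl fun j _ => ?_
  rw [Complex.star_def, Complex.mul_conj]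
  rw [ov]
  push_cast
  ring

lemma cfc_id {A : Matrix (Fin m) (Fin m) ℂ} (hA : A.IsHermitian) :
    hA.cfc (fun x => x) = A := by
  have : hA.cfc (fun x => x) = eU hA * diagonal (fun i => (ev hA i : ℂ)) * star (eU hA) := rfl
  rw [this, ← spectral hA]

lemma pair_self {A : Matrix (Fin m) (Fin m) ℂ} (hA : A.IsHermitian) (k : ℝ → ℝ → ℝ) :
    pair hA hA k = ∑ i, k (ev hA i) (ev hA i) := by
  rw [pair]
  refine Finset.sum_congr rfl fun i _ => ?_
  rw [Finset.sum_eq_single i]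
  · simp [ov, ovM_self, Matrix.one_apply_eq]
  · intro j _ hj
    simp [ov, ovM_self, Matrix.one_apply_ne (Ne.symm hj)]
  · simp

lemma relEnt_eq {A B : Matrix (Fin m) (Fin m) ℂ} (hA : A.IsHermitian) (hB : B.IsHermitian) :
    relEnt A B = (∑ i, ev hA i * Real.log (ev hA i))
      - pair hA hB (fun p q => p * Real.log q) := by
  rw [relEnt]
  rw [matLog, dif_pos hA, matLog, dif_pos hB]
  have e1 : A * Matrix.IsHermitian.cfc hA Real.log = hA.cfc (fun x => x) * hA.cfc Real.log := by
    rw [cfc_id hA]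
  have e2 : A * Matrix.IsHermitian.cfc hB Real.log = hA.cfc (fun x => x) * hB.cfc Real.log := by
    rw [cfc_id hA]
  rw [e1, e2, trace_cfc_mul_cfc hA hA (fun x => x) Real.log,
    trace_cfc_mul_cfc hA hB (fun x => x) Real.log]
  rw [Complex.sub_re, Complex.ofReal_re, Complex.ofReal_re, pair_self hA]

lemma trace_re_eq {A : Matrix (Fin m) (Fin m) ℂ} (hA : A.IsHermitian) :
    (Matrix.trace A).re = ∑ i, ev hA i := by
  conv_lhs => rw [spectral hA]
  rw [trace_conj_unitary (eU_star_mul hA), Matrix.trace_diagonal]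
  rw [Complex.re_sum]
  simp

/-! ### The variational inequality -/

/-- the harmonic-type kernel -/
noncomputable def hfun (lam p q : ℝ) : ℝ := lam * p * q / (lam * p + q)

/-- the quadratic functional whose infimum over `Y` is `pair (hfun lam)` -/
noncomputable def Efun (A B : Matrix (Fin m) (Fin m) ℂ) (lam : ℝ)
    (Y : Matrix (Fin m) (Fin m) ℂ) : ℝ :=
  (Matrix.trace (Yᴴ * Y * B)).re + lam * (Matrix.trace ((1 - Y)ᴴ * A * (1 - Y))).re

lemma scalar_ineq {lam p q : ℝ} (hlam : 0 ≤ lam) (hp : 0 ≤ p) (hq : 0 ≤ q)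
    (mz nz : ℂ) :
    hfun lam p q * Complex.normSq mz ≤
      q * Complex.normSq nz + lam * p * Complex.normSq (mz - nz) := by
  by_cases h : lam * p + q = 0
  · rw [hfun, h, div_zero, zero_mul]
    have := Complex.normSq_nonneg nz
    have := Complex.normSq_nonneg (mz - nz)
    have := mul_nonneg hlam hp
    nlinarith
  · have hpos : 0 < lam * p + q :=
      lt_of_le_of_ne (by positivity) (Ne.symm h)
    set a := ‖nz‖ with ha
    set b := ‖mz - nz‖ with hb
    set c := ‖mz‖ with hc
    have htri : c ≤ a + b := by
      have := norm_add_le nz (mz - nz)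
      simpa [hc, ha, hb] using this
    have ha0 : 0 ≤ a := norm_nonneg _
    have hb0 : 0 ≤ b := norm_nonneg _
    have hc0 : 0 ≤ c := norm_nonneg _
    have h1 : Complex.normSq mz = c ^ 2 := (Complex.sq_norm mz).symm
    have h2 : Complex.normSq nz = a ^ 2 := (Complex.sq_norm nz).symm
    have h3 : Complex.normSq (mz - nz) = b ^ 2 := (Complex.sq_norm (mz - nz)).symm
    rw [h1, h2, h3, hfun, div_mul_eq_mul_div, div_le_iff₀ hpos]
    have hc2 : c ^ 2 ≤ (a + b) ^ 2 := by nlinarith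
    have hsq : 0 ≤ lam * p := mul_nonneg hlam hp
    nlinarith [sq_nonneg (q * a - lam * p * b), mul_le_mul_of_nonneg_left hc2 (mul_nonneg hsq hq)]

lemma scalar_eq {lam p q : ℝ} (hlam : 0 ≤ lam) (hp : 0 ≤ p) (hq : 0 < q) (mz : ℂ) :
    q * Complex.normSq ((lam * p / (lam * p + q) : ℝ) * mz)
      + lam * p * Complex.normSq (mz - (lam * p / (lam * p + q) : ℝ) * mz)
      = hfun lam p q * Complex.normSq mz := by
  have hpos : 0 < lam * p + q := by positivity
  have hg : mz - ((lam * p / (lam * p + q) : ℝ) : ℂ) * mz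
      = ((1 - lam * p / (lam * p + q) : ℝ) : ℂ) * mz := by
    push_cast
    ring
  rw [hg, Complex.normSq_mul, Complex.normSq_mul, Complex.normSq_ofReal, Complex.normSq_ofReal]
  have key : q * (lam * p / (lam * p + q) * (lam * p / (lam * p + q)))
      + lam * p * ((1 - lam * p / (lam * p + q)) * (1 - lam * p / (lam * p + q)))
      = hfun lam p q := by
    rw [hfun]
    field_simp
    ring
  linear_combination Complex.normSq mz * key

/-- rewriting the two trace functionals through the eigenbases -/
lemma Efun_eq {A B : Matrix (Fin m) (Fin m) ℂ} (hA : A.IsHermitian) (hB : B.IsHermitian)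
    (lam : ℝ) (N : Matrix (Fin m) (Fin m) ℂ) :
    Efun A B lam (eU hA * N * star (eU hB)) =
      ∑ i, ∑ j, (ev hB j * Complex.normSq (N i j)
        + lam * ev hA i * Complex.normSq (ovM hA hB i j - N i j)) := by
  have hUU : ∀ X : Matrix (Fin m) (Fin m) ℂ, star (eU hA) * (eU hA * X) = X := fun X => by
    rw [← Matrix.mul_assoc, eU_star_mul hA, Matrix.one_mul]
  have hVV : ∀ X : Matrix (Fin m) (Fin m) ℂ, star (eU hB) * (eU hB * X) = X := fun X => by
    rw [← Matrix.mul_assoc, eU_star_mul hB, Matrix.one_mul]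
  have hVV' : ∀ X : Matrix (Fin m) (Fin m) ℂ, eU hB * (star (eU hB) * X) = X := fun X => by
    rw [← Matrix.mul_assoc, eU_mul_star hB, Matrix.one_mul]
  have hone : (1 : Matrix (Fin m) (Fin m) ℂ) = eU hA * ovM hA hB * star (eU hB) := by
    rw [ovM, ← Matrix.mul_assoc, eU_mul_star hA, Matrix.one_mul, eU_mul_star hB]
  have hsub : (1 : Matrix (Fin m) (Fin m) ℂ) - eU hA * N * star (eU hB)
      = eU hA * (ovM hA hB - N) * star (eU hB) := by
    rw [Matrix.mul_sub, Matrix.sub_mul, ← hone]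
  have hstar : ∀ K : Matrix (Fin m) (Fin m) ℂ,
      (eU hA * K * star (eU hB))ᴴ = eU hB * Kᴴ * star (eU hA) := fun K => by
    simp only [← Matrix.star_eq_conjTranspose, StarMul.star_mul, star_star,
      Matrix.mul_assoc]
  have htr1 : ∀ K : Matrix (Fin m) (Fin m) ℂ,
      (Matrix.trace ((eU hA * K * star (eU hB))ᴴ * (eU hA * K * star (eU hB)) * B)).re
        = ∑ i, ∑ j, ev hB j * Complex.normSq (K i j) := by
    intro K
    have hmat : (eU hA * K * star (eU hB))ᴴ * (eU hA * K * star (eU hB)) * B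
        = eU hB * (Kᴴ * K * (star (eU hB) * B * eU hB)) * star (eU hB) := by
      rw [hstar K]
      simp only [Matrix.mul_assoc, hUU]
      rw [eU_mul_star hB, Matrix.mul_one]
    rw [hmat, conj_spectral hB, trace_conj_unitary (eU_star_mul hB)]
    rw [Matrix.trace]
    have : ∀ j, (Kᴴ * K * diagonal (fun j => (ev hB j : ℂ))).diag j
        = ∑ i, (starRingEnd ℂ) (K i j) * K i j * (ev hB j : ℂ) := by
      intro j
      rw [Matrix.diag, Matrix.mul_diagonal, Matrix.mul_apply, Finset.sum_mul]
      refine Finset.sum_congr rfl fun i _ => ?_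
      rw [Matrix.conjTranspose_apply]
      rfl
    rw [Finset.sum_congr rfl fun j _ => this j, Finset.sum_comm, Complex.re_sum]
    refine Finset.sum_congr rfl fun i _ => ?_
    rw [Complex.re_sum]
    refine Finset.sum_congr rfl fun j _ => ?_
    rw [mul_comm ((starRingEnd ℂ) (K i j)) (K i j), Complex.mul_conj]
    rw [← Complex.ofReal_mul, Complex.ofReal_re]
    ring
  have htr2 : ∀ K : Matrix (Fin m) (Fin m) ℂ,
      (Matrix.trace ((eU hA * K * star (eU hB))ᴴ * A * (eU hA * K * star (eU hB)))).re
        = ∑ i, ∑ j, ev hA i * Complex.normSq (K i j) := by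
    intro K
    have hmat : (eU hA * K * star (eU hB))ᴴ * A * (eU hA * K * star (eU hB))
        = eU hB * (Kᴴ * (star (eU hA) * A * eU hA) * K) * star (eU hB) := by
      rw [hstar K]
      simp only [Matrix.mul_assoc]
    rw [hmat, conj_spectral hA, trace_conj_unitary (eU_star_mul hB)]
    rw [Matrix.trace]
    have : ∀ j, (Kᴴ * diagonal (fun i => (ev hA i : ℂ)) * K).diag j
        = ∑ i, (starRingEnd ℂ) (K i j) * (ev hA i : ℂ) * K i j := by
      intro j
      rw [Matrix.diag, Matrix.mul_apply]
      refine Finset.sum_congr rfl fun i _ => ?_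
      rw [Matrix.mul_diagonal, Matrix.conjTranspose_apply]
      rfl
    rw [Finset.sum_congr rfl fun j _ => this j, Finset.sum_comm, Complex.re_sum]
    refine Finset.sum_congr rfl fun i _ => ?_
    rw [Complex.re_sum]
    refine Finset.sum_congr rfl fun j _ => ?_
    have : (starRingEnd ℂ) (K i j) * (ev hA i : ℂ) * K i j
        = (ev hA i : ℂ) * (K i j * (starRingEnd ℂ) (K i j)) := by ring
    rw [this, Complex.mul_conj, ← Complex.ofReal_mul, Complex.ofReal_re]
  rw [Efun, htr1 N, hsub, htr2 (ovM hA hB - N)]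
  rw [Finset.mul_sum, ← Finset.sum_add_distrib]
  refine Finset.sum_congr rfl fun i _ => ?_
  rw [Finset.mul_sum, ← Finset.sum_add_distrib]
  refine Finset.sum_congr rfl fun j _ => ?_
  have : (ovM hA hB - N) i j = ovM hA hB i j - N i j := rfl
  rw [this]
  ring

lemma lemA {A B : Matrix (Fin m) (Fin m) ℂ} (hA : A.PosSemidef) (hB : B.PosSemidef)
    {lam : ℝ} (hlam : 0 ≤ lam) (Y : Matrix (Fin m) (Fin m) ℂ) :
    pair hA.1 hB.1 (hfun lam) ≤ Efun A B lam Y := by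
  have hY : Y = eU hA.1 * (star (eU hA.1) * Y * eU hB.1) * star (eU hB.1) := by
    simp only [Matrix.mul_assoc]
    rw [eU_mul_star hB.1, Matrix.mul_one, ← Matrix.mul_assoc, eU_mul_star hA.1, Matrix.one_mul]
  rw [hY, Efun_eq hA.1 hB.1, pair]
  refine Finset.sum_le_sum fun i _ => Finset.sum_le_sum fun j _ => ?_
  have h := scalar_ineq (p := ev hA.1 i) (q := ev hB.1 j) hlam (hA.eigenvalues_nonneg i)
    (hB.eigenvalues_nonneg j) (ovM hA.1 hB.1 i j) ((star (eU hA.1) * Y * eU hB.1) i j)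
  have hov : ov hA.1 hB.1 i j = Complex.normSq (ovM hA.1 hB.1 i j) := rfl
  rw [hov]
  linarith

lemma lemB {A B : Matrix (Fin m) (Fin m) ℂ} (hA : A.PosSemidef) (hB : B.PosDef)
    {lam : ℝ} (hlam : 0 ≤ lam) :
    ∃ Y, pair hA.1 hB.1 (hfun lam) = Efun A B lam Y := by
  classical
  set N : Matrix (Fin m) (Fin m) ℂ := Matrix.of fun i j =>
    ((lam * ev hA.1 i / (lam * ev hA.1 i + ev hB.1 j) : ℝ) : ℂ) * ovM hA.1 hB.1 i j with hN
  refine ⟨eU hA.1 * N * star (eU hB.1), ?_⟩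
  rw [Efun_eq hA.1 hB.1, pair]
  refine Finset.sum_congr rfl fun i _ => Finset.sum_congr rfl fun j _ => ?_
  have hNij : N i j
      = ((lam * ev hA.1 i / (lam * ev hA.1 i + ev hB.1 j) : ℝ) : ℂ) * ovM hA.1 hB.1 i j := rfl
  have := scalar_eq (p := ev hA.1 i) (q := ev hB.1 j) hlam (hA.eigenvalues_nonneg i)
    (hB.eigenvalues_pos j) (ovM hA.1 hB.1 i j)
  rw [hNij, ov]
  linear_combination -this

lemma Efun_combo {A₁ A₂ B₁ B₂ : Matrix (Fin m) (Fin m) ℂ} (l : ℝ) (lam : ℝ)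
    (Y : Matrix (Fin m) (Fin m) ℂ) :
    Efun (l • A₁ + (1 - l) • A₂) (l • B₁ + (1 - l) • B₂) lam Y =
      l * Efun A₁ B₁ lam Y + (1 - l) * Efun A₂ B₂ lam Y := by
  simp only [Efun, Matrix.mul_add, Matrix.add_mul, Matrix.mul_smul, Matrix.smul_mul,
    Matrix.trace_add, Matrix.trace_smul, Complex.add_re, Complex.smul_re,
    smul_eq_mul]
  ring

lemma psi_concave {A₁ A₂ B₁ B₂ : Matrix (Fin m) (Fin m) ℂ}
    (hA₁ : A₁.PosSemidef) (hA₂ : A₂.PosSemidef) (hB₁ : B₁.PosDef) (hB₂ : B₂.PosDef)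
    {l : ℝ} (hl0 : 0 ≤ l) (hl1 : l ≤ 1)
    (hAc : (l • A₁ + (1 - l) • A₂).PosSemidef) (hBc : (l • B₁ + (1 - l) • B₂).PosDef)
    {lam : ℝ} (hlam : 0 ≤ lam) :
    l * pair hA₁.1 hB₁.1 (hfun lam) + (1 - l) * pair hA₂.1 hB₂.1 (hfun lam) ≤
      pair hAc.1 hBc.1 (hfun lam) := by
  obtain ⟨Y, hY⟩ := lemB hAc hBc hlam
  have h1 := lemA hA₁ hB₁.posSemidef hlam Y
  have h2 := lemA hA₂ hB₂.posSemidef hlam Y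
  have := Efun_combo (A₁ := A₁) (A₂ := A₂) (B₁ := B₁) (B₂ := B₂) l lam Y
  calc l * pair hA₁.1 hB₁.1 (hfun lam) + (1 - l) * pair hA₂.1 hB₂.1 (hfun lam)
      ≤ l * Efun A₁ B₁ lam Y + (1 - l) * Efun A₂ B₂ lam Y := by
        have e1 : pair hA₁.1 hB₁.1 (hfun lam) = pair hA₁.1 hB₁.posSemidef.1 (hfun lam) := rfl
        have e2 : pair hA₂.1 hB₂.1 (hfun lam) = pair hA₂.1 hB₂.posSemidef.1 (hfun lam) := rfl
        rw [e1, e2]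
        exact add_le_add (mul_le_mul_of_nonneg_left h1 hl0)
          (mul_le_mul_of_nonneg_left h2 (by linarith))
    _ = Efun (l • A₁ + (1 - l) • A₂) (l • B₁ + (1 - l) • B₂) lam Y := this.symm
    _ = pair hAc.1 hBc.1 (hfun lam) := hY.symm

/-! ### positivity of convex combinations -/

lemma smul_posSemidef {c : ℝ} (hc : 0 ≤ c) {A : Matrix (Fin m) (Fin m) ℂ}
    (hA : A.PosSemidef) : (c • A).PosSemidef := by
  constructor
  · show (c • A)ᴴ = c • A
    rw [Matrix.conjTranspose_smul, star_trivial, hA.1]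
  · intro x
    exact (hA.smul hc).2 x

lemma smul_posDef {c : ℝ} (hc : 0 < c) {A : Matrix (Fin m) (Fin m) ℂ}
    (hA : A.PosDef) : (c • A).PosDef := by
  constructor
  · show (c • A)ᴴ = c • A
    rw [Matrix.conjTranspose_smul, star_trivial, hA.1]
  · intro x hx
    exact (hA.smul hc).2 hx

lemma combo_posSemidef {A₁ A₂ : Matrix (Fin m) (Fin m) ℂ} (hA₁ : A₁.PosSemidef)
    (hA₂ : A₂.PosSemidef) {l : ℝ} (hl0 : 0 ≤ l) (hl1 : l ≤ 1) :
    (l • A₁ + (1 - l) • A₂).PosSemidef :=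
  (smul_posSemidef hl0 hA₁).add (smul_posSemidef (by linarith) hA₂)

lemma combo_posDef {A₁ A₂ : Matrix (Fin m) (Fin m) ℂ} (hA₁ : A₁.PosDef)
    (hA₂ : A₂.PosDef) {l : ℝ} (hl0 : 0 ≤ l) (hl1 : l ≤ 1) :
    (l • A₁ + (1 - l) • A₂).PosDef := by
  rcases eq_or_lt_of_le hl0 with h | h
  · rw [← h]
    norm_num
    exact hA₂
  · exact (smul_posDef h hA₁).add_posSemidef
      (smul_posSemidef (by linarith) hA₂.posSemidef)

/-! ### the scalar integral representation -/

noncomputable def c0 (α : ℝ) : ℝ := ∫ u in Ioi (0:ℝ), u ^ (-α) / (1 + u)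

noncomputable def kern (α p q lam : ℝ) : ℝ := lam ^ (-α) * (p * q / (lam * p + q))

lemma integrable_aux {α C1 C2 : ℝ} (hα : α ∈ Ioo (0:ℝ) 1) {f : ℝ → ℝ}
    (hcont : ContinuousOn f (Ioi 0))
    (h0 : ∀ u : ℝ, u ∈ Ioc (0:ℝ) 1 → ‖f u‖ ≤ C1 * u ^ (-α))
    (h1 : ∀ u : ℝ, u ∈ Ioi (1:ℝ) → ‖f u‖ ≤ C2 * u ^ (-α - 1)) :
    IntegrableOn f (Ioi 0) := by
  obtain ⟨hα0, hα1⟩ := hα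
  have hs : Ioc (0:ℝ) 1 ∪ Ioi 1 = Ioi 0 := Ioc_union_Ioi_eq_Ioi zero_le_one
  rw [← hs]
  apply IntegrableOn.union
  · have hbase : IntegrableOn (fun u : ℝ => C1 * u ^ (-α)) (Ioc 0 1) := by
      apply Integrable.const_mul
      exact (intervalIntegrable_iff_integrableOn_Ioc_of_le zero_le_one).mp
        (intervalIntegral.intervalIntegrable_rpow' (by linarith))
    refine Integrable.mono' hbase ?_ ?_
    · exact ((hcont.mono (fun x hx => hx.1)).aestronglyMeasurable measurableSet_Ioc)
    · filter_upwards [ae_restrict_mem measurableSet_Ioc] with u hu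
      exact h0 u hu
  · have hbase : IntegrableOn (fun u : ℝ => C2 * u ^ (-α - 1)) (Ioi 1) :=
      (integrableOn_Ioi_rpow_of_lt (by linarith) one_pos).const_mul C2
    refine Integrable.mono' hbase ?_ ?_
    · exact ((hcont.mono (Ioi_subset_Ioi zero_le_one)).aestronglyMeasurable
        measurableSet_Ioi)
    · filter_upwards [ae_restrict_mem measurableSet_Ioi] with u hu
      exact h1 u hu

lemma c0_integrable {α : ℝ} (hα : α ∈ Ioo (0:ℝ) 1) :
    IntegrableOn (fun u : ℝ => u ^ (-α) / (1 + u)) (Ioi 0) := by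
  refine integrable_aux (C1 := 1) (C2 := 1) hα ?_ ?_ ?_
  · intro u hu
    have hu0 : (0:ℝ) < u := hu
    have h1u : (0:ℝ) < 1 + u := by linarith
    exact (((Real.continuousAt_rpow_const u (-α) (Or.inl (ne_of_gt hu0))).div
      ((continuous_const.add continuous_id).continuousAt) (ne_of_gt h1u)).continuousWithinAt)
  · intro u hu
    have hu0 : (0:ℝ) < u := hu.1
    have h1u : (0:ℝ) < 1 + u := by linarith
    have hr : (0:ℝ) ≤ u ^ (-α) := Real.rpow_nonneg hu0.le _
    rw [Real.norm_eq_abs, abs_of_nonneg (by positivity), one_mul]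
    calc u ^ (-α) / (1 + u) ≤ u ^ (-α) / 1 := by
          exact div_le_div_of_nonneg_left hr one_pos (by linarith)
      _ = u ^ (-α) := div_one _
  · intro u hu
    have hu1 : (1:ℝ) < u := hu
    have hu0 : (0:ℝ) < u := lt_trans one_pos hu1
    have h1u : (0:ℝ) < 1 + u := by linarith
    have hr : (0:ℝ) ≤ u ^ (-α) := Real.rpow_nonneg hu0.le _
    rw [Real.norm_eq_abs, abs_of_nonneg (by positivity), one_mul]
    calc u ^ (-α) / (1 + u) ≤ u ^ (-α) / u := by
          exact div_le_div_of_nonneg_left hr hu0 (by linarith)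
      _ = u ^ (-α - 1) := by
          rw [Real.rpow_sub hu0, Real.rpow_one]

lemma c0_pos {α : ℝ} (hα : α ∈ Ioo (0:ℝ) 1) : 0 < c0 α := by
  rw [c0]
  have hnn : 0 ≤ᵐ[volume.restrict (Ioi (0:ℝ))] fun u : ℝ => u ^ (-α) / (1 + u) := by
    filter_upwards [ae_restrict_mem measurableSet_Ioi] with u hu
    have hu0 : (0:ℝ) < u := hu
    positivity
  rw [setIntegral_pos_iff_support_of_nonneg_ae hnn (c0_integrable hα)]
  have hsub : Ioi (0:ℝ) ⊆ Function.support fun u : ℝ => u ^ (-α) / (1 + u) := by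
    intro u hu
    have hu0 : (0:ℝ) < u := hu
    have : (0:ℝ) < u ^ (-α) / (1 + u) := by positivity
    exact ne_of_gt this
  rw [Set.inter_eq_right.mpr hsub, Real.volume_Ioi]
  simp

lemma kern_integrable {α : ℝ} (hα : α ∈ Ioo (0:ℝ) 1) {p q : ℝ} (hp : 0 ≤ p) (hq : 0 < q) :
    IntegrableOn (kern α p q) (Ioi 0) := by
  refine integrable_aux (C1 := p) (C2 := q) hα ?_ ?_ ?_
  · intro u hu
    have hu0 : (0:ℝ) < u := hu
    have hden : (0:ℝ) < u * p + q := by positivity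
    exact (((Real.continuousAt_rpow_const u (-α) (Or.inl (ne_of_gt hu0))).mul
      ((continuousAt_const.div ((continuousAt_id.mul continuousAt_const).add
        continuousAt_const) (ne_of_gt hden)))).continuousWithinAt)
  · intro u hu
    have hu0 : (0:ℝ) < u := hu.1
    have hden : (0:ℝ) < u * p + q := by positivity
    have hfrac : p * q / (u * p + q) ≤ p := by
      rw [div_le_iff₀ hden]
      nlinarith [mul_nonneg (mul_nonneg hu0.le hp) hp]
    have hfrac0 : 0 ≤ p * q / (u * p + q) := by positivity
    have hr : (0:ℝ) ≤ u ^ (-α) := Real.rpow_nonneg hu0.le _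
    rw [kern, Real.norm_eq_abs, abs_of_nonneg (by positivity), mul_comm p (u ^ (-α))]
    exact mul_le_mul_of_nonneg_left hfrac hr
  · intro u hu
    have hu1 : (1:ℝ) < u := hu
    have hu0 : (0:ℝ) < u := lt_trans one_pos hu1
    have hden : (0:ℝ) < u * p + q := by positivity
    have hfrac : p * q / (u * p + q) ≤ q / u := by
      rw [div_le_div_iff₀ hden hu0]
      nlinarith [mul_nonneg hp hq.le]
    have hr : (0:ℝ) ≤ u ^ (-α) := Real.rpow_nonneg hu0.le _
    rw [kern, Real.norm_eq_abs, abs_of_nonneg (by positivity)]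
    calc u ^ (-α) * (p * q / (u * p + q)) ≤ u ^ (-α) * (q / u) :=
          mul_le_mul_of_nonneg_left hfrac hr
      _ = q * u ^ (-α - 1) := by
          rw [Real.rpow_sub hu0, Real.rpow_one]
          ring

lemma kern_integral {α : ℝ} (hα : α ∈ Ioo (0:ℝ) 1) {p q : ℝ} (hp : 0 ≤ p) (hq : 0 < q) :
    ∫ lam in Ioi (0:ℝ), kern α p q lam = c0 α * (p ^ α * q ^ (1 - α)) := by
  rcases eq_or_lt_of_le hp with hp0 | hp0
  · have hz : (fun lam : ℝ => kern α p q lam) = fun _ => 0 := by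
      funext lam
      rw [kern, ← hp0]
      simp
    rw [hz, ← hp0, Real.zero_rpow (ne_of_gt hα.1)]
    simp
  · set c : ℝ := q / p with hc
    have hc0 : 0 < c := div_pos hq hp0
    have key := MeasureTheory.integral_comp_mul_left_Ioi (kern α p q) 0 hc0
    rw [mul_zero] at key
    have hpt : ∀ x ∈ Ioi (0:ℝ), kern α p q (c * x)
        = (c ^ (-α) * p) * (x ^ (-α) / (1 + x)) := by
      intro x hx
      have hx0 : (0:ℝ) < x := hx
      rw [kern, Real.mul_rpow hc0.le hx0.le]
      have hden : c * x * p + q = q * (1 + x) := by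
        rw [hc]
        field_simp
        ring
      rw [hden]
      have : p * q / (q * (1 + x)) = p / (1 + x) := by
        rw [mul_comm p q, mul_div_mul_left _ _ (ne_of_gt hq)]
      rw [this]
      ring
    have hint : ∫ x in Ioi (0:ℝ), kern α p q (c * x)
        = (c ^ (-α) * p) * c0 α := by
      rw [setIntegral_congr_fun measurableSet_Ioi hpt, MeasureTheory.integral_const_mul, c0]
    rw [hint] at key
    have hres : ∫ lam in Ioi (0:ℝ), kern α p q lam = c * ((c ^ (-α) * p) * c0 α) := by
      rw [key, smul_eq_mul, ← mul_assoc, mul_inv_cancel₀ (ne_of_gt hc0), one_mul]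
    rw [hres]
    have hcc : c * (c ^ (-α) * p) = p ^ α * q ^ (1 - α) := by
      have h1 : c * c ^ (-α) = c ^ (1 - α) := by
        rw [show (1:ℝ) - α = 1 + (-α) by ring, Real.rpow_add hc0, Real.rpow_one]
      have h2 : p / p ^ (1 - α) = p ^ α := by
        have hh := Real.rpow_sub hp0 1 (1 - α)
        rw [Real.rpow_one] at hh
        rw [← hh]
        congr 1
        ring
      have hpne : p ^ (1 - α) ≠ 0 := ne_of_gt (Real.rpow_pos_of_pos hp0 _)
      rw [← mul_assoc, h1, hc, Real.div_rpow hq.le hp0.le, ← h2]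
      field_simp
    rw [← mul_assoc, hcc, mul_comm]

lemma kern_eq_hfun {α p q lam : ℝ} (hlam : 0 < lam) :
    kern α p q lam = lam ^ (-α - 1) * hfun lam p q := by
  rw [kern, hfun]
  have h1 : lam ^ (-α) = lam ^ (-α - 1) * lam := by
    rw [← Real.rpow_add_one (ne_of_gt hlam)]
    norm_num
  rw [h1]
  ring

/-! ### concavity of `(A,B) ↦ Tr[A^α B^(1-α)]` -/

lemma pair_rep {A B : Matrix (Fin m) (Fin m) ℂ} (hA : A.PosSemidef) (hB : B.PosDef)
    {α : ℝ} (hα : α ∈ Ioo (0:ℝ) 1) :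
    IntegrableOn
      (fun lam => ∑ i, ∑ j, ov hA.1 hB.1 i j * kern α (ev hA.1 i) (ev hB.1 j) lam) (Ioi 0)
    ∧ ∫ lam in Ioi (0:ℝ), (∑ i, ∑ j, ov hA.1 hB.1 i j * kern α (ev hA.1 i) (ev hB.1 j) lam)
        = c0 α * pair hA.1 hB.1 (fun p q => p ^ α * q ^ (1 - α)) := by
  have hint : ∀ i j : Fin m, IntegrableOn
      (fun lam => ov hA.1 hB.1 i j * kern α (ev hA.1 i) (ev hB.1 j) lam) (Ioi 0) := by
    intro i j
    exact (kern_integrable hα (hA.eigenvalues_nonneg i) (hB.eigenvalues_pos j)).const_mul _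
  have hint2 : ∀ i : Fin m, IntegrableOn
      (fun lam => ∑ j, ov hA.1 hB.1 i j * kern α (ev hA.1 i) (ev hB.1 j) lam) (Ioi 0) :=
    fun i => MeasureTheory.integrable_finset_sum _ (fun j _ => hint i j)
  constructor
  · exact MeasureTheory.integrable_finset_sum _ (fun i _ => hint2 i)
  · rw [MeasureTheory.integral_finset_sum _ (fun i _ => hint2 i)]
    have : ∀ i : Fin m,
        (∫ lam in Ioi (0:ℝ), ∑ j, ov hA.1 hB.1 i j * kern α (ev hA.1 i) (ev hB.1 j) lam)
        = ∑ j, ov hA.1 hB.1 i j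
            * (c0 α * ((ev hA.1 i) ^ α * (ev hB.1 j) ^ (1 - α))) := by
      intro i
      rw [MeasureTheory.integral_finset_sum _ (fun j _ => hint i j)]
      refine Finset.sum_congr rfl fun j _ => ?_
      rw [MeasureTheory.integral_const_mul,
        kern_integral (p := ev hA.1 i) (q := ev hB.1 j) hα (hA.eigenvalues_nonneg i)
          (hB.eigenvalues_pos j)]
    rw [Finset.sum_congr rfl fun i _ => this i, pair, Finset.mul_sum]
    refine Finset.sum_congr rfl fun i _ => ?_
    rw [Finset.mul_sum]
    refine Finset.sum_congr rfl fun j _ => ?_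
    ring

lemma sum_kern_eq {A B : Matrix (Fin m) (Fin m) ℂ} (hA : A.IsHermitian) (hB : B.IsHermitian)
    {α lam : ℝ} (hlam : 0 < lam) :
    (∑ i, ∑ j, ov hA hB i j * kern α (ev hA i) (ev hB j) lam)
      = lam ^ (-α - 1) * pair hA hB (hfun lam) := by
  rw [pair, Finset.mul_sum]
  refine Finset.sum_congr rfl fun i _ => ?_
  rw [Finset.mul_sum]
  refine Finset.sum_congr rfl fun j _ => ?_
  rw [kern_eq_hfun hlam]
  ring

lemma F_concave {A₁ A₂ B₁ B₂ : Matrix (Fin m) (Fin m) ℂ}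
    (hA₁ : A₁.PosSemidef) (hA₂ : A₂.PosSemidef) (hB₁ : B₁.PosDef) (hB₂ : B₂.PosDef)
    {l : ℝ} (hl0 : 0 ≤ l) (hl1 : l ≤ 1)
    (hAc : (l • A₁ + (1 - l) • A₂).PosSemidef) (hBc : (l • B₁ + (1 - l) • B₂).PosDef)
    {α : ℝ} (hα : α ∈ Ioo (0:ℝ) 1) :
    l * pair hA₁.1 hB₁.1 (fun p q => p ^ α * q ^ (1 - α))
      + (1 - l) * pair hA₂.1 hB₂.1 (fun p q => p ^ α * q ^ (1 - α)) ≤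
      pair hAc.1 hBc.1 (fun p q => p ^ α * q ^ (1 - α)) := by
  have hc0 := c0_pos hα
  obtain ⟨hI₁, hE₁⟩ := pair_rep hA₁ hB₁ hα
  obtain ⟨hI₂, hE₂⟩ := pair_rep hA₂ hB₂ hα
  obtain ⟨hIc, hEc⟩ := pair_rep hAc hBc hα
  have hpt : ∀ lam ∈ Ioi (0:ℝ),
      l * (∑ i, ∑ j, ov hA₁.1 hB₁.1 i j * kern α (ev hA₁.1 i) (ev hB₁.1 j) lam)
        + (1 - l) * (∑ i, ∑ j, ov hA₂.1 hB₂.1 i j * kern α (ev hA₂.1 i) (ev hB₂.1 j) lam)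
      ≤ ∑ i, ∑ j, ov hAc.1 hBc.1 i j * kern α (ev hAc.1 i) (ev hBc.1 j) lam := by
    intro lam hlam
    have hlam0 : (0:ℝ) < lam := hlam
    rw [sum_kern_eq hA₁.1 hB₁.1 hlam0, sum_kern_eq hA₂.1 hB₂.1 hlam0,
      sum_kern_eq hAc.1 hBc.1 hlam0]
    have hψ := psi_concave hA₁ hA₂ hB₁ hB₂ hl0 hl1 hAc hBc hlam0.le
    have hw : (0:ℝ) ≤ lam ^ (-α - 1) := Real.rpow_nonneg hlam0.le _
    calc l * (lam ^ (-α - 1) * pair hA₁.1 hB₁.1 (hfun lam))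
          + (1 - l) * (lam ^ (-α - 1) * pair hA₂.1 hB₂.1 (hfun lam))
        = lam ^ (-α - 1) * (l * pair hA₁.1 hB₁.1 (hfun lam)
            + (1 - l) * pair hA₂.1 hB₂.1 (hfun lam)) := by ring
      _ ≤ lam ^ (-α - 1) * pair hAc.1 hBc.1 (hfun lam) :=
          mul_le_mul_of_nonneg_left hψ hw
  have hmono := setIntegral_mono_on
    (f := fun lam => l * (∑ i, ∑ j, ov hA₁.1 hB₁.1 i j * kern α (ev hA₁.1 i) (ev hB₁.1 j) lam)
        + (1 - l) * (∑ i, ∑ j, ov hA₂.1 hB₂.1 i j * kern α (ev hA₂.1 i) (ev hB₂.1 j) lam))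
    ((hI₁.const_mul l).add (hI₂.const_mul (1 - l))) hIc
    measurableSet_Ioi hpt
  rw [MeasureTheory.integral_add (hI₁.const_mul l) (hI₂.const_mul (1 - l)),
    MeasureTheory.integral_const_mul, MeasureTheory.integral_const_mul, hE₁, hE₂, hEc] at hmono
  have h' : c0 α * (l * pair hA₁.1 hB₁.1 (fun p q => p ^ α * q ^ (1 - α))
      + (1 - l) * pair hA₂.1 hB₂.1 (fun p q => p ^ α * q ^ (1 - α)))
      ≤ c0 α * pair hAc.1 hBc.1 (fun p q => p ^ α * q ^ (1 - α)) := by linarith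
  exact le_of_mul_le_mul_left h' hc0 

/-! ### the limit `α → 1⁻` -/

lemma slope_tendsto {p q : ℝ} (hp : 0 ≤ p) (hq : 0 < q) :
    Tendsto (fun α : ℝ => (p - p ^ α * q ^ (1 - α)) / (1 - α)) (𝓝[<] 1)
      (𝓝 (p * Real.log p - p * Real.log q)) := by
  rcases eq_or_lt_of_le hp with hp0 | hp0
  · have hev : (fun α : ℝ => (p - p ^ α * q ^ (1 - α)) / (1 - α)) =ᶠ[𝓝[<] (1:ℝ)]
        fun _ => 0 := by
      filter_upwards [Ioo_mem_nhdsLT_of_mem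
        (show (1:ℝ) ∈ Ioc (0:ℝ) 1 by constructor <;> norm_num)] with α hα
      rw [← hp0, Real.zero_rpow (ne_of_gt hα.1)]
      simp
    rw [Filter.tendsto_congr' hev, ← hp0]
    simp
  · have hf1 : p ^ (1:ℝ) * q ^ (1 - (1:ℝ)) = p := by
      rw [Real.rpow_one, show (1:ℝ) - 1 = 0 by ring, Real.rpow_zero, mul_one]
    have hd1 : HasDerivAt (fun α : ℝ => p ^ α) (p ^ (1:ℝ) * Real.log p) 1 :=
      (Real.hasStrictDerivAt_const_rpow hp0 1).hasDerivAt
    have hd2 : HasDerivAt (fun α : ℝ => q ^ (1 - α))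
        (q ^ (1 - (1:ℝ)) * Real.log q * (-1)) 1 := by
      have hinner : HasDerivAt (fun α : ℝ => 1 - α) (-1) 1 := by
        exact (hasDerivAt_id' (1:ℝ)).const_sub 1
      exact HasDerivAt.comp 1 ((Real.hasStrictDerivAt_const_rpow hq (1 - 1)).hasDerivAt) hinner
    have hg : HasDerivAt (fun α : ℝ => p ^ α * q ^ (1 - α))
        (p * Real.log p - p * Real.log q) 1 := by
      have := hd1.mul hd2
      refine this.congr_deriv ?_
      rw [Real.rpow_one, show (1:ℝ) - 1 = 0 by ring, Real.rpow_zero]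
      ring
    have hslope := hasDerivAt_iff_tendsto_slope.mp hg
    have heq : ∀ α : ℝ, (p - p ^ α * q ^ (1 - α)) / (1 - α)
        = slope (fun α : ℝ => p ^ α * q ^ (1 - α)) 1 α := by
      intro α
      rw [slope_def_field, hf1, ← neg_sub p (p ^ α * q ^ (1 - α)),
        ← neg_sub (1:ℝ) α, neg_div_neg_eq]
    have : (fun α : ℝ => (p - p ^ α * q ^ (1 - α)) / (1 - α))
        = slope (fun α : ℝ => p ^ α * q ^ (1 - α)) 1 := funext heq
    rw [this]
    exact hslope.mono_left (nhdsWithin_mono _ (fun x hx => ne_of_lt hx))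

lemma J_tendsto {A B : Matrix (Fin m) (Fin m) ℂ} (hA : A.PosSemidef) (hB : B.PosDef) :
    Tendsto (fun α : ℝ =>
        ((Matrix.trace A).re - pair hA.1 hB.1 (fun p q => p ^ α * q ^ (1 - α))) / (1 - α))
      (𝓝[<] 1) (𝓝 (relEnt A B)) := by
  have hfe : ∀ α : ℝ,
      ((Matrix.trace A).re - pair hA.1 hB.1 (fun p q => p ^ α * q ^ (1 - α))) / (1 - α)
      = ∑ i, ∑ j, ov hA.1 hB.1 i j
          * ((ev hA.1 i - (ev hA.1 i) ^ α * (ev hB.1 j) ^ (1 - α)) / (1 - α)) := by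
    intro α
    have htr : (Matrix.trace A).re = ∑ i, ∑ j, ov hA.1 hB.1 i j * ev hA.1 i := by
      rw [trace_re_eq hA.1]
      refine Finset.sum_congr rfl fun i _ => ?_
      rw [← Finset.sum_mul, ov_row_sum hA.1 hB.1 i, one_mul]
    rw [htr, pair, ← Finset.sum_sub_distrib, Finset.sum_div]
    refine Finset.sum_congr rfl fun i _ => ?_
    rw [← Finset.sum_sub_distrib, Finset.sum_div]
    refine Finset.sum_congr rfl fun j _ => ?_
    rw [← mul_sub, mul_div_assoc]
  have hval : ∑ i, ∑ j, ov hA.1 hB.1 i j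
      * (ev hA.1 i * Real.log (ev hA.1 i) - ev hA.1 i * Real.log (ev hB.1 j))
      = relEnt A B := by
    rw [relEnt_eq hA.1 hB.1, pair, ← Finset.sum_sub_distrib]
    refine Finset.sum_congr rfl fun i _ => ?_
    have expand : ∀ j, ov hA.1 hB.1 i j
        * (ev hA.1 i * Real.log (ev hA.1 i) - ev hA.1 i * Real.log (ev hB.1 j))
        = ov hA.1 hB.1 i j * (ev hA.1 i * Real.log (ev hA.1 i))
          - ov hA.1 hB.1 i j * (ev hA.1 i * Real.log (ev hB.1 j)) := fun j => mul_sub _ _ _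
    rw [Finset.sum_congr rfl fun j _ => expand j, Finset.sum_sub_distrib, ← Finset.sum_mul,
      ov_row_sum hA.1 hB.1 i, one_mul]
  simp only [hfe]
  rw [← hval]
  refine tendsto_finset_sum _ fun i _ => tendsto_finset_sum _ fun j _ => ?_
  exact (slope_tendsto (hA.eigenvalues_nonneg i) (hB.eigenvalues_pos j)).const_mul _

end RelEntAux

open RelEntAux

/-- Joint convexity of the quantum relative entropy: for density matrices
`D_{φ₁}, D_{φ₂}, D_{ρ₁}, D_{ρ₂}` (with the `D_{ρᵢ}` positive definite) and `λ ∈ [0,1]`,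
`S(λφ₁+(1-λ)φ₂ ‖ λρ₁+(1-λ)ρ₂) ≤ λ S(φ₁‖ρ₁) + (1-λ) S(φ₂‖ρ₂)`. -/
theorem relEnt_jointly_convex {m : ℕ} (Dφ₁ Dφ₂ Dρ₁ Dρ₂ : Matrix (Fin m) (Fin m) ℂ)
    (hφ₁ : Dφ₁.PosSemidef) (hφ₁1 : Matrix.trace Dφ₁ = 1)
    (hφ₂ : Dφ₂.PosSemidef) (hφ₂1 : Matrix.trace Dφ₂ = 1)
    (hρ₁ : Dρ₁.PosDef) (hρ₁1 : Matrix.trace Dρ₁ = 1)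
    (hρ₂ : Dρ₂.PosDef) (hρ₂1 : Matrix.trace Dρ₂ = 1)
    (l : ℝ) (hl0 : 0 ≤ l) (hl1 : l ≤ 1) :
    relEnt (l • Dφ₁ + (1 - l) • Dφ₂) (l • Dρ₁ + (1 - l) • Dρ₂) ≤
      l * relEnt Dφ₁ Dρ₁ + (1 - l) * relEnt Dφ₂ Dρ₂ := by
  have hAc : (l • Dφ₁ + (1 - l) • Dφ₂).PosSemidef := combo_posSemidef hφ₁ hφ₂ hl0 hl1
  have hBc : (l • Dρ₁ + (1 - l) • Dρ₂).PosDef := combo_posDef hρ₁ hρ₂ hl0 hl1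
  refine le_of_tendsto_of_tendsto (J_tendsto hAc hBc)
    (((J_tendsto hφ₁ hρ₁).const_mul l).add ((J_tendsto hφ₂ hρ₂).const_mul (1 - l))) ?_
  filter_upwards [Ioo_mem_nhdsLT_of_mem (show (1:ℝ) ∈ Ioc (0:ℝ) 1 by constructor <;> norm_num)]
    with α hα
  have h1α : 0 < 1 - α := by linarith [hα.2]
  have hF := F_concave hφ₁ hφ₂ hρ₁ hρ₂ hl0 hl1 hAc hBc hα
  have htr : (Matrix.trace (l • Dφ₁ + (1 - l) • Dφ₂)).re =
      l * (Matrix.trace Dφ₁).re + (1 - l) * (Matrix.trace Dφ₂).re := by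
    simp [Matrix.trace_add, Matrix.trace_smul, Complex.add_re, Complex.smul_re]
  rw [htr]
  have hrw : ∀ a b c d : ℝ, l * ((a - b) / (1 - α)) + (1 - l) * ((c - d) / (1 - α))
      = (l * a + (1 - l) * c - (l * b + (1 - l) * d)) / (1 - α) := by
    intros; field_simp; ring
  rw [hrw]
  have := sub_le_sub_left hF (l * (Matrix.trace Dφ₁).re + (1 - l) * (Matrix.trace Dφ₂).re)
  exact (div_le_div_iff_of_pos_right h1α).mpr this
end

section
/- Let X, H be Hermitian m×m matrices, ρ the Gibbs state with density exp(-H)/Tr(exp(-H)). For every state φ on M_m(ℂ) and every t ∈ ℝ, log(Tr(exp(tX-H))/Tr(exp(-H))) ≥ t·φ(X) - S(φ‖ρ), i.e. the Gibbs variational inequality holds. -/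
open Matrix
open scoped ComplexOrder

/-! ### Auxiliary lemmas -/

lemma contOn_finite {s : Set ℝ} (hs : s.Finite) (f : ℝ → ℝ) : ContinuousOn f s := by
  rw [continuousOn_iff_continuous_restrict]
  haveI : Finite s := hs
  exact continuous_of_discreteTopology

lemma matLog_of_isHermitian {m : ℕ} {A : Matrix (Fin m) (Fin m) ℂ} (hA : A.IsHermitian) :
    matLog A = (hA.eigenvectorUnitary : Matrix (Fin m) (Fin m) ℂ) *
      diagonal (fun i => (Real.log (hA.eigenvalues i) : ℂ)) *
      star (hA.eigenvectorUnitary : Matrix (Fin m) (Fin m) ℂ) := by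
  rw [matLog, dif_pos hA]; rfl

lemma herm_exp_eq {m : ℕ} (A : Matrix (Fin m) (Fin m) ℂ) (hA : A.IsHermitian) :
    NormedSpace.exp A =
      (hA.eigenvectorUnitary : Matrix (Fin m) (Fin m) ℂ)
        * diagonal (fun i => (Real.exp (hA.eigenvalues i) : ℂ))
        * star (hA.eigenvectorUnitary : Matrix (Fin m) (Fin m) ℂ) := by
  set U : Matrix (Fin m) (Fin m) ℂ := (hA.eigenvectorUnitary : Matrix (Fin m) (Fin m) ℂ)
    with hUdef
  have hU1 : star U * U = 1 := Unitary.coe_star_mul_self _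
  have hU2 : U * star U = 1 := Unitary.coe_mul_star_self _
  have hUinv : U⁻¹ = star U := inv_eq_left_inv hU1
  have hUu : IsUnit U := ⟨⟨U, star U, hU2, hU1⟩, rfl⟩
  conv_lhs => rw [hA.spectral_theorem, Unitary.conjStarAlgAut_apply, ← hUinv]
  rw [Matrix.exp_conj U _ hUu, Matrix.exp_diagonal, hUinv]
  congr 2
  funext i
  simp [Pi.exp_def, Function.comp, ← Complex.exp_eq_exp_ℂ, ← Complex.ofReal_exp]

lemma trace_unitary_conj_diag {m : ℕ} (U : Matrix (Fin m) (Fin m) ℂ)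
    (hU : star U * U = 1) (d : Fin m → ℂ) :
    Matrix.trace (U * diagonal d * star U) = ∑ i, d i := by
  rw [Matrix.trace_mul_cycle, hU, Matrix.one_mul, Matrix.trace_diagonal]

lemma herm_trace_exp {m : ℕ} (A : Matrix (Fin m) (Fin m) ℂ) (hA : A.IsHermitian) :
    Matrix.trace (NormedSpace.exp A) = ((∑ j, Real.exp (hA.eigenvalues j) : ℝ) : ℂ) := by
  rw [herm_exp_eq A hA, trace_unitary_conj_diag _ (Unitary.coe_star_mul_self _)]
  push_cast
  rfl

lemma trace_diag_conj {m : ℕ} (W : Matrix (Fin m) (Fin m) ℂ) (a b : Fin m → ℂ) :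
    Matrix.trace (diagonal a * W * diagonal b * Wᴴ) =
      ∑ i, ∑ j, a i * b j * ((Complex.normSq (W i j) : ℂ)) := by
  simp only [Matrix.trace, Matrix.diag_apply]
  refine Finset.sum_congr rfl fun i _ => ?_
  rw [Matrix.mul_apply]
  refine Finset.sum_congr rfl fun j _ => ?_
  simp only [Matrix.mul_diagonal, Matrix.diagonal_mul, Matrix.conjTranspose_apply,
    Complex.star_def, ← Complex.mul_conj]
  ring

lemma klein_scalar {p q : ℝ} (hp : 0 ≤ p) (hq : 0 < q) :
    p - q ≤ p * Real.log p - p * Real.log q := by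
  rcases eq_or_lt_of_le hp with h | h
  · simp [← h]; linarith
  · have h1 := Real.log_le_sub_one_of_pos (div_pos hq h)
    rw [Real.log_div hq.ne' h.ne'] at h1
    have h3 : p * (q / p) = q := by field_simp
    nlinarith [mul_le_mul_of_nonneg_left h1 hp]

lemma klein_matrix {m : ℕ} (V U : Matrix (Fin m) (Fin m) ℂ)
    (hV : V ∈ Matrix.unitaryGroup (Fin m) ℂ) (hU : U ∈ Matrix.unitaryGroup (Fin m) ℂ)
    (p q : Fin m → ℝ) (hp : ∀ i, 0 ≤ p i) (hq : ∀ j, 0 < q j) :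
    (∑ i, p i) - (∑ j, q j) ≤
      (Matrix.trace ((V * diagonal (fun i => (p i : ℂ)) * star V) *
        (V * diagonal (fun i => (Real.log (p i) : ℂ)) * star V))).re -
      (Matrix.trace ((V * diagonal (fun i => (p i : ℂ)) * star V) *
        (U * diagonal (fun j => (Real.log (q j) : ℂ)) * star U))).re := by
  have hV1 : star V * V = 1 := (Matrix.mem_unitaryGroup_iff'.mp hV)
  have hU1 : star U * U = 1 := (Matrix.mem_unitaryGroup_iff'.mp hU)
  set W : Matrix (Fin m) (Fin m) ℂ := star V * U with hW
  have hWU : W ∈ Matrix.unitaryGroup (Fin m) ℂ :=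
    Submonoid.mul_mem _ ((Unitary.star_mem_iff).mpr hV) hU
  have hrow : ∀ i, ∑ j, Complex.normSq (W i j) = 1 := by
    intro i
    have h2 : W * star W = 1 := Matrix.mem_unitaryGroup_iff.mp hWU
    have h3 := congrFun (congrFun h2 i) i
    rw [Matrix.mul_apply] at h3
    have := congrArg Complex.re h3
    simpa [Matrix.one_apply, Complex.star_def, Complex.mul_conj] using this
  have hcol : ∀ j, ∑ i, Complex.normSq (W i j) = 1 := by
    intro j
    have h2 : star W * W = 1 := Matrix.mem_unitaryGroup_iff'.mp hWU
    have h3 := congrFun (congrFun h2 j) j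
    rw [Matrix.mul_apply] at h3
    have := congrArg Complex.re h3
    simpa [Matrix.one_apply, Complex.star_def, Complex.mul_conj, mul_comm] using this
  have e1 : (Matrix.trace ((V * diagonal (fun i => (p i : ℂ)) * star V) *
      (V * diagonal (fun i => (Real.log (p i) : ℂ)) * star V))).re
      = ∑ i, p i * Real.log (p i) := by
    have heq : (V * diagonal (fun i => (p i : ℂ)) * star V) *
        (V * diagonal (fun i => (Real.log (p i) : ℂ)) * star V)
        = V * diagonal (fun i => (p i : ℂ) * (Real.log (p i) : ℂ)) * star V := by
      rw [← Matrix.diagonal_mul_diagonal]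
      calc V * diagonal (fun i => (p i : ℂ)) * star V *
            (V * diagonal (fun i => (Real.log (p i) : ℂ)) * star V)
          = V * diagonal (fun i => (p i : ℂ)) * (star V * V) *
            diagonal (fun i => (Real.log (p i) : ℂ)) * star V := by
            simp only [Matrix.mul_assoc]
        _ = _ := by rw [hV1]; simp only [Matrix.mul_one, Matrix.mul_assoc]
    rw [heq, trace_unitary_conj_diag _ hV1]
    simp
  have e2 : (Matrix.trace ((V * diagonal (fun i => (p i : ℂ)) * star V) *
      (U * diagonal (fun j => (Real.log (q j) : ℂ)) * star U))).re
      = ∑ i, ∑ j, p i * Real.log (q j) * Complex.normSq (W i j) := by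
    have h3 : (V * diagonal (fun i => (p i : ℂ)) * star V) *
        (U * diagonal (fun j => (Real.log (q j) : ℂ)) * star U)
        = V * (diagonal (fun i => (p i : ℂ)) * W *
            diagonal (fun j => (Real.log (q j) : ℂ)) * Wᴴ) * star V := by
      have hsw : star W = star U * V := by rw [hW, StarMul.star_mul, star_star]
      have hV2 : V * star V = 1 := Matrix.mem_unitaryGroup_iff.mp hV
      rw [← Matrix.star_eq_conjTranspose, hsw, hW]
      simp only [Matrix.mul_assoc]
      rw [hV2, Matrix.mul_one]
    rw [h3, Matrix.trace_mul_cycle, ← Matrix.mul_assoc, hV1, Matrix.one_mul,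
      trace_diag_conj]
    simp
  rw [e1, e2]
  have key : ∀ i j, Complex.normSq (W i j) * p i - Complex.normSq (W i j) * q j ≤
      Complex.normSq (W i j) * (p i * Real.log (p i)) -
      Complex.normSq (W i j) * (p i * Real.log (q j)) := by
    intro i j
    have h := klein_scalar (hp i) (hq j)
    nlinarith [Complex.normSq_nonneg (W i j),
      mul_le_mul_of_nonneg_left h (Complex.normSq_nonneg (W i j))]
  have s1 : ∀ i, ∑ j, Complex.normSq (W i j) * p i = p i := by
    intro i; rw [← Finset.sum_mul, hrow i, one_mul]
  have s2 : ∀ j, ∑ i, Complex.normSq (W i j) * q j = q j := by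
    intro j; rw [← Finset.sum_mul, hcol j, one_mul]
  calc (∑ i, p i) - (∑ j, q j)
      = ∑ i, ∑ j, (Complex.normSq (W i j) * p i - Complex.normSq (W i j) * q j) := by
        simp only [Finset.sum_sub_distrib]
        congr 1
        · exact (Finset.sum_congr rfl fun i _ => s1 i).symm
        · rw [Finset.sum_comm]
          exact (Finset.sum_congr rfl fun j _ => s2 j).symm
    _ ≤ ∑ i, ∑ j, (Complex.normSq (W i j) * (p i * Real.log (p i)) -
          Complex.normSq (W i j) * (p i * Real.log (q j))) :=
        Finset.sum_le_sum fun i _ => Finset.sum_le_sum fun j _ => key i j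
    _ = (∑ i, p i * Real.log (p i)) - ∑ i, ∑ j, p i * Real.log (q j) * Complex.normSq (W i j) := by
        simp only [Finset.sum_sub_distrib]
        congr 1
        · refine Finset.sum_congr rfl fun i _ => ?_
          rw [← Finset.sum_mul, hrow i, one_mul]
        · refine Finset.sum_congr rfl fun i _ => Finset.sum_congr rfl fun j _ => ?_
          ring

lemma matLog_gibbs {m : ℕ} (B : Matrix (Fin m) (Fin m) ℂ) (hB : B.IsHermitian)
    (c : ℝ) (hc : 0 < c) :
    matLog (c⁻¹ • NormedSpace.exp B) = B - (Real.log c : ℂ) • 1 := by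
  set U : Matrix (Fin m) (Fin m) ℂ := (hB.eigenvectorUnitary : Matrix (Fin m) (Fin m) ℂ)
  set μ : Fin m → ℝ := hB.eigenvalues
  set g : ℝ → ℝ := fun x => c⁻¹ * Real.exp x with hg
  have hdiag2 : (c⁻¹ • diagonal (fun i => (Real.exp (μ i) : ℂ)) : Matrix (Fin m) (Fin m) ℂ)
      = diagonal (RCLike.ofReal ∘ g ∘ μ) := by
    rw [← Matrix.diagonal_smul]
    refine congrArg diagonal (funext fun i => ?_)
    simp only [Pi.smul_apply, hg, Complex.real_smul, Function.comp_apply, RCLike.ofReal_alg]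
    push_cast
    ring
  have hScfc : c⁻¹ • NormedSpace.exp B = hB.cfc g := by
    rw [herm_exp_eq B hB, Matrix.IsHermitian.cfc, Unitary.conjStarAlgAut_apply, ← Matrix.smul_mul, ← Matrix.mul_smul, hdiag2]
  have hSA : IsSelfAdjoint B := hB
  have hfin : (spectrum ℝ B).Finite := B.finite_real_spectrum
  have hcont1 : ContinuousOn g (spectrum ℝ B) := contOn_finite hfin g
  have hcont2 : ContinuousOn Real.log (g '' spectrum ℝ B) := contOn_finite (hfin.image g) _
  have hS : (c⁻¹ • NormedSpace.exp B).IsHermitian := by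
    rw [hScfc, ← hB.cfc_eq g]
    exact (cfc_predicate g B : IsSelfAdjoint _)
  have key : matLog (c⁻¹ • NormedSpace.exp B) = cfc (Real.log ∘ g) B := by
    rw [matLog, dif_pos hS, ← hS.cfc_eq Real.log, hScfc, ← hB.cfc_eq g,
      cfc_comp Real.log g B hSA hcont2 hcont1]
  rw [key, hB.cfc_eq (Real.log ∘ g), Matrix.IsHermitian.cfc, Unitary.conjStarAlgAut_apply]
  have hdiag : diagonal (RCLike.ofReal ∘ (Real.log ∘ g) ∘ μ)
      = diagonal (fun j => (μ j : ℂ)) - (Real.log c : ℂ) • 1 := by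
    ext i j
    by_cases hij : i = j
    · subst hij
      have hval : Real.log (g (μ i)) = μ i - Real.log c := by
        rw [hg]
        simp only []
        rw [Real.log_mul (inv_ne_zero hc.ne') (Real.exp_pos _).ne', Real.log_exp,
          Real.log_inv]
        ring
      simp [Function.comp, hval, Complex.ofReal_sub, Matrix.one_apply_eq]
    · simp [Matrix.diagonal_apply_ne _ hij, Matrix.one_apply_ne hij]
  rw [hdiag, Matrix.mul_sub, Matrix.sub_mul]
  congr 1
  · have h := hB.spectral_theorem; rw [Unitary.conjStarAlgAut_apply] at h; exact h.symm
  · have hU2 : U * star U = 1 := Unitary.coe_mul_star_self _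
    rw [Matrix.mul_smul, Matrix.smul_mul, Matrix.mul_one, hU2]

lemma gibbs_core {m : ℕ} (A : Matrix (Fin m) (Fin m) ℂ) (hA : A.IsHermitian)
    (Dφ : Matrix (Fin m) (Fin m) ℂ) (hφ : Dφ.PosSemidef) (hφ1 : Matrix.trace Dφ = 1) :
    (Matrix.trace (Dφ * A)).re - (Matrix.trace (Dφ * matLog Dφ)).re ≤
      Real.log ((Matrix.trace (NormedSpace.exp A)).re) := by
  have hm : m ≠ 0 := by rintro rfl; simp [Matrix.trace] at hφ1
  haveI : Nonempty (Fin m) := ⟨⟨0, Nat.pos_of_ne_zero hm⟩⟩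
  set U : Matrix (Fin m) (Fin m) ℂ := (hA.eigenvectorUnitary : Matrix (Fin m) (Fin m) ℂ)
    with hUdef
  set μ : Fin m → ℝ := hA.eigenvalues with hμdef
  set c : ℝ := ∑ j, Real.exp (μ j) with hcdef
  have hcpos : 0 < c := Finset.sum_pos (fun j _ => Real.exp_pos _) Finset.univ_nonempty
  have hU1 : star U * U = 1 := Unitary.coe_star_mul_self _
  have hU2 : U * star U = 1 := Unitary.coe_mul_star_self _
  have htr : (Matrix.trace (NormedSpace.exp A)).re = c := by
    rw [herm_trace_exp A hA, Complex.ofReal_re]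
  have hφH : Dφ.IsHermitian := hφ.1
  set V : Matrix (Fin m) (Fin m) ℂ := (hφH.eigenvectorUnitary : Matrix (Fin m) (Fin m) ℂ)
    with hVdef
  set pp : Fin m → ℝ := hφH.eigenvalues with hppdef
  have hV1 : star V * V = 1 := Unitary.coe_star_mul_self _
  have hDφ : Dφ = V * diagonal (fun i => (pp i : ℂ)) * star V := by
    have h := hφH.spectral_theorem; rw [Unitary.conjStarAlgAut_apply] at h; exact h
  have hp : ∀ i, 0 ≤ pp i := fun i => hφ.eigenvalues_nonneg i
  have hsum_p : ∑ i, pp i = 1 := by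
    have h := hφ1
    rw [hDφ, trace_unitary_conj_diag _ hV1] at h
    exact_mod_cast h
  set q : Fin m → ℝ := fun j => c⁻¹ * Real.exp (μ j) with hqdef
  have hq : ∀ j, 0 < q j := fun j => mul_pos (inv_pos.mpr hcpos) (Real.exp_pos _)
  have hsum_q : ∑ j, q j = 1 := by
    rw [hqdef]
    rw [← Finset.mul_sum, ← hcdef, inv_mul_cancel₀ hcpos.ne']
  have hlogq : ∀ j, Real.log (q j) = μ j - Real.log c := by
    intro j
    rw [hqdef]
    rw [Real.log_mul (inv_ne_zero hcpos.ne') (Real.exp_pos _).ne', Real.log_exp,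
      Real.log_inv]
    ring
  have hUlog : U * diagonal (fun j => (Real.log (q j) : ℂ)) * star U
      = A - (Real.log c : ℂ) • 1 := by
    have hdiag : diagonal (fun j => (Real.log (q j) : ℂ))
        = diagonal (fun j => (μ j : ℂ)) - (Real.log c : ℂ) • 1 := by
      ext i j
      by_cases hij : i = j
      · subst hij
        simp [Matrix.diagonal_apply_eq, Matrix.one_apply_eq, hlogq i, Complex.ofReal_sub]
      · simp [Matrix.diagonal_apply_ne _ hij, Matrix.one_apply_ne hij]
    rw [hdiag, Matrix.mul_sub, Matrix.sub_mul]
    congr 1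
    · have h := hA.spectral_theorem; rw [Unitary.conjStarAlgAut_apply] at h; exact h.symm
    · rw [Matrix.mul_smul, Matrix.smul_mul, Matrix.mul_one, hU2]
  have hKl := klein_matrix V U (SetLike.coe_mem _) (SetLike.coe_mem _) pp q hp hq
  rw [hsum_p, hsum_q, sub_self] at hKl
  rw [← hDφ, hUlog] at hKl
  have hmatlog : matLog Dφ = V * diagonal (fun i => (Real.log (pp i) : ℂ)) * star V :=
    matLog_of_isHermitian hφH
  rw [← hmatlog] at hKl
  have htr2 : (Matrix.trace (Dφ * (A - (Real.log c : ℂ) • 1))).re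
      = (Matrix.trace (Dφ * A)).re - Real.log c := by
    rw [Matrix.mul_sub, Matrix.trace_sub, Matrix.mul_smul, Matrix.mul_one,
      Matrix.trace_smul, hφ1]
    simp
  rw [htr2] at hKl
  rw [htr]
  linarith

/-- Gibbs variational inequality: for Hermitian `X, H`, the Gibbs state `ρ` with density
`exp(-H)/Tr(exp(-H))`, every state `φ` and every `t ∈ ℝ`,
`log (Tr(exp(tX-H)) / Tr(exp(-H))) ≥ t φ(X) - S(φ‖ρ)`. -/
theorem gibbs_variational_inequality {m : ℕ} (X H : Matrix (Fin m) (Fin m) ℂ)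
    (hX : X.IsHermitian) (hH : H.IsHermitian)
    (Dφ : Matrix (Fin m) (Fin m) ℂ) (hφ : Dφ.PosSemidef) (hφ1 : Matrix.trace Dφ = 1)
    (Dρ : Matrix (Fin m) (Fin m) ℂ)
    (hρ : Dρ = ((Matrix.trace (NormedSpace.exp (-H))).re)⁻¹ • NormedSpace.exp (-H))
    (t : ℝ) :
    t * (Matrix.trace (Dφ * X)).re - relEnt Dφ Dρ ≤
      Real.log ((Matrix.trace (NormedSpace.exp (t • X - H))).re /
        (Matrix.trace (NormedSpace.exp (-H))).re) := by
  have hm : m ≠ 0 := by rintro rfl; simp [Matrix.trace] at hφ1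
  haveI : Nonempty (Fin m) := ⟨⟨0, Nat.pos_of_ne_zero hm⟩⟩
  have hH' : (-H).IsHermitian := hH.neg
  have htX : (t • X).IsHermitian := by
    have hct : (t • X)ᴴ = t • Xᴴ := by
      ext i j
      simp [Matrix.conjTranspose_apply, Complex.real_smul]
    rw [Matrix.IsHermitian, hct, hX]
  have hA : (t • X - H).IsHermitian := htX.sub hH
  set c0 : ℝ := (Matrix.trace (NormedSpace.exp (-H))).re with hc0
  set c1 : ℝ := (Matrix.trace (NormedSpace.exp (t • X - H))).re with hc1
  have hc0pos : 0 < c0 := by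
    rw [hc0, herm_trace_exp _ hH', Complex.ofReal_re]
    exact Finset.sum_pos (fun _ _ => Real.exp_pos _) Finset.univ_nonempty
  have hc1pos : 0 < c1 := by
    rw [hc1, herm_trace_exp _ hA, Complex.ofReal_re]
    exact Finset.sum_pos (fun _ _ => Real.exp_pos _) Finset.univ_nonempty
  have hlogρ : matLog Dρ = -H - (Real.log c0 : ℂ) • 1 := by
    rw [hρ]
    exact matLog_gibbs (-H) hH' c0 hc0pos
  have hrel : relEnt Dφ Dρ = (Matrix.trace (Dφ * matLog Dφ)).re
      + (Matrix.trace (Dφ * H)).re + Real.log c0 := by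
    rw [relEnt, hlogρ]
    have h1 : Dφ * (-H - (Real.log c0 : ℂ) • 1)
        = -(Dφ * H) - (Real.log c0 : ℂ) • Dφ := by
      rw [Matrix.mul_sub, Matrix.mul_neg, Matrix.mul_smul, Matrix.mul_one]
    rw [h1, Matrix.trace_sub, Matrix.trace_neg, Matrix.trace_smul, hφ1]
    simp
    ring
  have hcore := gibbs_core (t • X - H) hA Dφ hφ hφ1
  have hsplit : (Matrix.trace (Dφ * (t • X - H))).re
      = t * (Matrix.trace (Dφ * X)).re - (Matrix.trace (Dφ * H)).re := by
    rw [Matrix.mul_sub, Matrix.trace_sub, Matrix.mul_smul, Matrix.trace_smul]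
    simp [Complex.sub_re]
  rw [hsplit] at hcore
  rw [Real.log_div hc1pos.ne' hc0pos.ne', hrel]
  linarith
end

section
/- Let X be a Hermitian matrix with ‖X‖ ≤ R and n ≥ k ≥ 1. Denote X^{(n)} = (1/n)Σ_{i=1}^n X_i acting on the n-fold tensor power, where X_i is X on the i-th factor. Then ‖(X^{(n)})^k - (k!/n^k) Σ_{i_1<…<i_k} X_{i_1}⋯X_{i_k}‖ ≤ (1 - ∏_{j=0}^{k-1}(1 - j/n))·R^k, and in particular this bound tends to 0 as n → ∞ for fixed k. -/
open Matrix Filter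
open scoped Matrix.Norms.L2Operator Classical

/-- The copy `X_i = 1 ⊗ ⋯ ⊗ X ⊗ ⋯ ⊗ 1` of an `m × m` matrix `X` in the `i`-th tensor factor of
`M_m(ℂ)^{⊗ n}`, realized as a matrix indexed by `Fin n → Fin m` (Kronecker power picture). -/
noncomputable def tensorFactor {m : ℕ} (X : Matrix (Fin m) (Fin m) ℂ) (n : ℕ) (i : Fin n) :
    Matrix (Fin n → Fin m) (Fin n → Fin m) ℂ :=
  fun a b => X (a i) (b i) * ∏ j ∈ Finset.univ.erase i, (if a j = b j then (1:ℂ) else 0)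

set_option maxHeartbeats 1600000

lemma tensorFactor_apply {m n : ℕ} (X : Matrix (Fin m) (Fin m) ℂ) (i : Fin n)
    (a b : Fin n → Fin m) :
    tensorFactor X n i a b = if ∀ j, j ≠ i → a j = b j then X (a i) (b i) else 0 := by
  rw [tensorFactor, Finset.prod_boole, mul_boole]
  simp [Finset.mem_erase]

lemma tensorFactor_mulVec {m n : ℕ} (X : Matrix (Fin m) (Fin m) ℂ) (i : Fin n)
    (x : (Fin n → Fin m) → ℂ) (a : Fin n → Fin m) :
    (tensorFactor X n i *ᵥ x) a
      = ∑ p : Fin m, X (a i) p *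
          x ((Equiv.funSplitAt i (Fin m)).symm (p, fun j => a j)) := by
  classical
  simp only [Matrix.mulVec, dotProduct, tensorFactor_apply, ite_mul, zero_mul]
  rw [← Equiv.sum_comp (Equiv.funSplitAt i (Fin m)).symm, Fintype.sum_prod_type]
  refine Finset.sum_congr rfl fun p _ => ?_
  rw [Finset.sum_eq_single (fun j : {j : Fin n // j ≠ i} => a j)]
  · rw [if_pos, Equiv.funSplitAt_symm_apply, dif_pos rfl]
    intro j hj
    rw [Equiv.funSplitAt_symm_apply, dif_neg hj]
  · intro r _ hr
    rw [if_neg]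
    intro h
    apply hr
    funext j
    rw [h j j.2, Equiv.funSplitAt_symm_apply, dif_neg j.2]
  · intro h
    exact absurd (Finset.mem_univ _) h

lemma tensorFactor_norm_le {m n : ℕ} (X : Matrix (Fin m) (Fin m) ℂ) (i : Fin n) :
    ‖tensorFactor X n i‖ ≤ ‖X‖ := by
  classical
  rw [Matrix.l2_opNorm_def]
  refine ContinuousLinearMap.opNorm_le_bound _ (norm_nonneg X) fun x => ?_
  set e := Equiv.funSplitAt i (Fin m) with he
  set A := tensorFactor X n i with hA
  set v : ({j : Fin n // j ≠ i} → Fin m) → EuclideanSpace ℂ (Fin m) :=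
    fun r => WithLp.toLp 2 (fun p => x (e.symm (p, r))) with hv
  have happ : ∀ a : Fin n → Fin m,
      (((Matrix.toEuclideanLin.trans LinearMap.toContinuousLinearMap) A) x) a
        = (X *ᵥ (v fun j => a j)) (a i) := by
    intro a
    simp only [LinearEquiv.trans_apply, LinearMap.coe_toContinuousLinearMap',
      Matrix.toEuclideanLin_apply]
    have : ((WithLp.equiv 2 ((Fin n → Fin m) → ℂ)).symm
        (A *ᵥ (WithLp.equiv 2 ((Fin n → Fin m) → ℂ)) x)) a
        = (A *ᵥ (x : (Fin n → Fin m) → ℂ)) a := rfl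
    rw [hA, tensorFactor_mulVec]
    rfl
  have key : (∑ a : Fin n → Fin m,
      ‖(((Matrix.toEuclideanLin.trans LinearMap.toContinuousLinearMap) A) x) a‖ ^ 2)
      ≤ (‖X‖ * ‖x‖) ^ 2 := by
    calc (∑ a : Fin n → Fin m,
        ‖(((Matrix.toEuclideanLin.trans LinearMap.toContinuousLinearMap) A) x) a‖ ^ 2)
        = ∑ a : Fin n → Fin m, ‖(X *ᵥ (v fun j => a j)) (a i)‖ ^ 2 := by
          refine Finset.sum_congr rfl fun a _ => ?_; rw [happ a]
      _ = ∑ q : Fin m × ({j : Fin n // j ≠ i} → Fin m), ‖(X *ᵥ (v q.2)) q.1‖ ^ 2 := by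
          rw [← Equiv.sum_comp e.symm
            (fun a => ‖(X *ᵥ (v fun j => a j)) (a i)‖ ^ 2)]
          refine Finset.sum_congr rfl fun q _ => ?_
          have h1 : (e.symm q) i = q.1 := by
            rw [he, Equiv.funSplitAt_symm_apply, dif_pos rfl]
          have h2 : (fun j : {j : Fin n // j ≠ i} => (e.symm q) j) = q.2 := by
            funext j
            rw [he, Equiv.funSplitAt_symm_apply, dif_neg j.2]
          rw [h1, h2]
      _ = ∑ r : {j : Fin n // j ≠ i} → Fin m, ∑ p : Fin m, ‖(X *ᵥ (v r)) p‖ ^ 2 := by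
          rw [Fintype.sum_prod_type]; exact Finset.sum_comm
      _ ≤ ∑ r : {j : Fin n // j ≠ i} → Fin m, ‖X‖ ^ 2 * ∑ p : Fin m, ‖v r p‖ ^ 2 := by
          refine Finset.sum_le_sum fun r _ => ?_
          have h1 : ‖(EuclideanSpace.equiv (Fin m) ℂ).symm (X *ᵥ (v r))‖ ≤ ‖X‖ * ‖v r‖ :=
            X.l2_opNorm_mulVec (v r)
          have h2 : (∑ p : Fin m, ‖(X *ᵥ (v r)) p‖ ^ 2)
              = ‖(EuclideanSpace.equiv (Fin m) ℂ).symm (X *ᵥ (v r))‖ ^ 2 := by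
            rw [EuclideanSpace.norm_eq, Real.sq_sqrt]
            · rfl
            · positivity
          have h3 : ‖v r‖ ^ 2 = ∑ p : Fin m, ‖v r p‖ ^ 2 := by
            rw [EuclideanSpace.norm_eq, Real.sq_sqrt]; positivity
          rw [h2, ← h3]
          calc ‖(EuclideanSpace.equiv (Fin m) ℂ).symm (X *ᵥ (v r))‖ ^ 2
              ≤ (‖X‖ * ‖v r‖) ^ 2 := by
                apply pow_le_pow_left₀ (norm_nonneg _) h1
            _ = ‖X‖ ^ 2 * ‖v r‖ ^ 2 := by ring
      _ = ‖X‖ ^ 2 * ∑ q : Fin m × ({j : Fin n // j ≠ i} → Fin m), ‖x (e.symm q)‖ ^ 2 := by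
          rw [← Finset.mul_sum, Fintype.sum_prod_type]
          congr 1
          exact Finset.sum_comm
      _ = (‖X‖ * ‖x‖) ^ 2 := by
          have hx2 : ‖x‖ ^ 2 = ∑ b : Fin n → Fin m, ‖x b‖ ^ 2 := by
            rw [EuclideanSpace.norm_eq, Real.sq_sqrt]
            positivity
          rw [Equiv.sum_comp e.symm (fun b => ‖x b‖ ^ 2), ← hx2]; ring
  have key2 := Real.sqrt_le_sqrt key
  rw [Real.sqrt_sq (mul_nonneg (norm_nonneg _) (norm_nonneg _))] at key2
  rw [EuclideanSpace.norm_eq]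
  exact key2

lemma tensorFactor_mul_apply {m n : ℕ} (X : Matrix (Fin m) (Fin m) ℂ) {i j : Fin n}
    (hij : i ≠ j) (a b : Fin n → Fin m) :
    (tensorFactor X n i * tensorFactor X n j) a b
      = if ∀ l, l ≠ i → l ≠ j → a l = b l then X (a i) (b i) * X (a j) (b j) else 0 := by
  classical
  rw [Matrix.mul_apply]
  rw [Finset.sum_eq_single (Function.update a i (b i))]
  · have h1 : tensorFactor X n i a (Function.update a i (b i)) = X (a i) (b i) := by
      rw [tensorFactor_apply, if_pos, Function.update_self]
      intro l hl; rw [Function.update_of_ne hl]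
    have h2 : tensorFactor X n j (Function.update a i (b i)) b
        = if ∀ l, l ≠ i → l ≠ j → a l = b l then X (a j) (b j) else 0 := by
      rw [tensorFactor_apply, Function.update_of_ne (Ne.symm hij)]
      congr 1
      simp only [eq_iff_iff]
      constructor
      · intro h l hli hlj
        have := h l hlj
        rwa [Function.update_of_ne hli] at this
      · intro h l hlj
        by_cases hli : l = i
        · rw [hli, Function.update_self]
        · rw [Function.update_of_ne hli]; exact h l hli hlj
    rw [h1, h2, mul_ite, mul_zero]
  · intro c _ hc
    rw [tensorFactor_apply, tensorFactor_apply]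
    by_cases H1 : ∀ l, l ≠ i → a l = c l
    · by_cases H2 : ∀ l, l ≠ j → c l = b l
      · exfalso
        apply hc
        funext l
        by_cases hli : l = i
        · rw [hli, Function.update_self]; exact H2 i hij
        · rw [Function.update_of_ne hli]; exact (H1 l hli).symm
      · rw [if_neg H2, mul_zero]
    · rw [if_neg H1, zero_mul]
  · intro h; exact absurd (Finset.mem_univ _) h

lemma tensorFactor_commute {m n : ℕ} (X : Matrix (Fin m) (Fin m) ℂ) {i j : Fin n}
    (hij : i ≠ j) : Commute (tensorFactor X n i) (tensorFactor X n j) := by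
  show _ = _
  ext a b
  rw [tensorFactor_mul_apply X hij, tensorFactor_mul_apply X hij.symm]
  rw [mul_comm (X (a i) (b i))]
  congr 1
  simp only [eq_iff_iff]
  exact ⟨fun h l h1 h2 => h l h2 h1, fun h l h1 h2 => h l h2 h1⟩

lemma sum_pow_eq {R : Type*} [Semiring R] {n : ℕ} (A : Fin n → R) :
    ∀ k : ℕ, (∑ i : Fin n, A i) ^ k
      = ∑ f : Fin k → Fin n, (List.ofFn fun j => A (f j)).prod
  | 0 => by simp
  | (k+1) => by
    rw [pow_succ', sum_pow_eq A k]
    rw [← Equiv.sum_comp (Fin.consEquiv fun _ => Fin n)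
      (fun g : Fin (k+1) → Fin n => (List.ofFn fun j => A (g j)).prod)]
    rw [Fintype.sum_prod_type, Finset.sum_mul]
    refine Finset.sum_congr rfl fun i _ => ?_
    rw [Finset.mul_sum]
    refine Finset.sum_congr rfl fun f _ => ?_
    rw [List.ofFn_succ, List.prod_cons]
    simp [Fin.consEquiv]

lemma norm_prod_le_pow {α : Type*} [NormedRing α] {R : ℝ} (hR : 0 ≤ R) :
    ∀ l : List α, l ≠ [] → (∀ a ∈ l, ‖a‖ ≤ R) → ‖l.prod‖ ≤ R ^ l.length
  | [], h, _ => absurd rfl h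
  | [a], _, hl => by simpa using hl a (by simp)
  | (a :: b :: l), _, hl => by
    rw [List.prod_cons]
    calc ‖a * (b :: l).prod‖ ≤ ‖a‖ * ‖(b :: l).prod‖ := norm_mul_le _ _
      _ ≤ R * R ^ (b :: l).length := by
          exact mul_le_mul (hl a (by simp))
            (norm_prod_le_pow hR (b :: l) (by simp)
              (fun x hx => hl x (List.mem_cons_of_mem _ hx)))
            (norm_nonneg _) hR
      _ = R ^ (a :: b :: l).length := by
          simp [List.length_cons, pow_succ]; ring

lemma sum_inj_eq {m n k : ℕ} (X : Matrix (Fin m) (Fin m) ℂ) :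
    ∑ f ∈ Finset.univ.filter (fun f : Fin k → Fin n => Function.Injective f),
        (List.ofFn fun j => tensorFactor X n (f j)).prod
      = k.factorial •
        ∑ v ∈ Finset.univ.filter (fun v : Fin k → Fin n => StrictMono v),
          (List.ofFn fun j => tensorFactor X n (v j)).prod := by
  classical
  have hP : ∀ (σ : Equiv.Perm (Fin k)) (v : Fin k → Fin n), Function.Injective v →
      (List.ofFn fun j => tensorFactor X n (v (σ j))).prod
        = (List.ofFn fun j => tensorFactor X n (v j)).prod := by
    intro σ v hv
    have hperm : List.Perm (List.ofFn ((fun j => tensorFactor X n (v j)) ∘ σ))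
        (List.ofFn (fun j => tensorFactor X n (v j))) :=
      σ.ofFn_comp_perm (fun j => tensorFactor X n (v j))
    have hpair : (List.ofFn ((fun j => tensorFactor X n (v j)) ∘ σ)).Pairwise Commute := by
      rw [List.pairwise_ofFn]
      intro a b hab
      exact tensorFactor_commute X (fun h => absurd (σ.injective (hv h)) hab.ne)
    exact hperm.prod_eq' hpair
  set sSM := Finset.univ.filter (fun x : Equiv.Perm (Fin k) × (Fin k → Fin n) => StrictMono x.2)
    with hsSM
  have hi : ∀ x ∈ sSM, x.2 ∘ x.1 ∈
      Finset.univ.filter (fun f : Fin k → Fin n => Function.Injective f) := by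
    intro x hx
    rw [hsSM, Finset.mem_filter] at hx
    rw [Finset.mem_filter]
    exact ⟨Finset.mem_univ _, hx.2.injective.comp x.1.injective⟩
  have hinj : ∀ x ∈ sSM, ∀ y ∈ sSM, x.2 ∘ x.1 = y.2 ∘ y.1 → x = y := by
    intro x hx y hy hxy
    rw [hsSM, Finset.mem_filter] at hx hy
    have hcx : (Finset.image x.2 Finset.univ).card = k := by
      rw [Finset.card_image_of_injective _ hx.2.injective, Finset.card_univ, Fintype.card_fin]
    have him : Finset.image x.2 Finset.univ = Finset.image y.2 Finset.univ := by
      ext z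
      simp only [Finset.mem_image]
      constructor
      · rintro ⟨w, -, rfl⟩
        refine ⟨y.1 (x.1.symm w), Finset.mem_univ _, ?_⟩
        have := congrFun hxy (x.1.symm w)
        simpa using this.symm
      · rintro ⟨w, -, rfl⟩
        refine ⟨x.1 (y.1.symm w), Finset.mem_univ _, ?_⟩
        have := congrFun hxy (y.1.symm w)
        simpa using this
    have e1 : x.2 = (Finset.image x.2 Finset.univ).orderEmbOfFin hcx :=
      Finset.orderEmbOfFin_unique hcx
        (fun t => Finset.mem_image_of_mem _ (Finset.mem_univ t)) hx.2
    have e2 : y.2 = (Finset.image x.2 Finset.univ).orderEmbOfFin hcx :=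
      Finset.orderEmbOfFin_unique hcx
        (fun t => him ▸ Finset.mem_image_of_mem _ (Finset.mem_univ t)) hy.2
    have h2 : x.2 = y.2 := e1.trans e2.symm
    have h1 : x.1 = y.1 := by
      apply Equiv.ext
      intro j
      apply hx.2.injective
      have := congrFun hxy j
      simp only [Function.comp_apply] at this
      rw [this, h2]
    exact Prod.ext h1 h2
  have hsurj : ∀ f ∈ Finset.univ.filter (fun f : Fin k → Fin n => Function.Injective f),
      ∃ x, ∃ _ : x ∈ sSM, x.2 ∘ x.1 = f := by
    intro f hf
    rw [Finset.mem_filter] at hf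
    obtain ⟨-, hf⟩ := hf
    have hcard : (Finset.image f Finset.univ).card = k := by
      rw [Finset.card_image_of_injective _ hf, Finset.card_univ, Fintype.card_fin]
    have hmem : ∀ j, f j ∈ Finset.image f Finset.univ :=
      fun j => Finset.mem_image_of_mem f (Finset.mem_univ j)
    set τ : Fin k → Fin k :=
      fun j => ((Finset.image f Finset.univ).orderIsoOfFin hcard).symm ⟨f j, hmem j⟩ with hτ
    have key : ∀ a, (Finset.image f Finset.univ).orderEmbOfFin hcard (τ a) = f a := by
      intro a
      rw [← Finset.coe_orderIsoOfFin_apply, hτ, OrderIso.apply_symm_apply]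
    have hτinj : Function.Injective τ := by
      intro a b h
      apply hf
      rw [← key a, ← key b, h]
    refine ⟨(Equiv.ofBijective τ (Finite.injective_iff_bijective.mp hτinj),
      (Finset.image f Finset.univ).orderEmbOfFin hcard), ?_, ?_⟩
    · rw [hsSM, Finset.mem_filter]
      exact ⟨Finset.mem_univ _, ((Finset.image f Finset.univ).orderEmbOfFin hcard).strictMono⟩
    · funext j
      exact key j
  have hbij := Finset.sum_bij (s := sSM)
    (t := Finset.univ.filter (fun f : Fin k → Fin n => Function.Injective f))
    (f := fun x : Equiv.Perm (Fin k) × (Fin k → Fin n) =>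
      (List.ofFn fun j => tensorFactor X n (x.2 j)).prod)
    (g := fun f : Fin k → Fin n => (List.ofFn fun j => tensorFactor X n (f j)).prod)
    (i := fun x _ => x.2 ∘ x.1) hi (fun x hx y hy => hinj x hx y hy) hsurj
    (fun x hx => by
      rw [hsSM, Finset.mem_filter] at hx
      exact (hP x.1 x.2 hx.2.injective).symm)
  rw [← hbij]
  have hprod : sSM = (Finset.univ : Finset (Equiv.Perm (Fin k))) ×ˢ
      (Finset.univ.filter fun v : Fin k → Fin n => StrictMono v) := by
    ext x
    simp [hsSM, Finset.mem_product]
  rw [hprod, Finset.sum_product]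
  rw [show (∑ x : Equiv.Perm (Fin k),
      ∑ y ∈ Finset.univ.filter (fun v : Fin k → Fin n => StrictMono v),
        (List.ofFn fun j => tensorFactor X n ((x, y).2 j)).prod)
    = ∑ _x : Equiv.Perm (Fin k),
      ∑ y ∈ Finset.univ.filter (fun v : Fin k → Fin n => StrictMono v),
        (List.ofFn fun j => tensorFactor X n (y j)).prod from rfl]
  rw [Finset.sum_const, Finset.card_univ, Fintype.card_perm, Fintype.card_fin]

/-- Let `X` be Hermitian with `‖X‖ ≤ R` and `n ≥ k ≥ 1`, and let
`X^{(n)} = (1/n) Σᵢ Xᵢ` on the `n`-fold tensor power. Then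
`‖(X^{(n)})^k - (k!/n^k) Σ_{i₁<⋯<i_k} X_{i₁}⋯X_{i_k}‖ ≤ (1 - ∏_{j<k}(1 - j/n)) R^k`,
and this bound tends to `0` as `n → ∞` for fixed `k`. -/
theorem averaged_power_approx {m : ℕ} (X : Matrix (Fin m) (Fin m) ℂ)
    (hX : X.IsHermitian) (R : ℝ) (hR : ‖X‖ ≤ R) (k : ℕ) (hk : 1 ≤ k) :
    (∀ n : ℕ, k ≤ n →
      ‖(((n : ℂ)⁻¹ • ∑ i : Fin n, tensorFactor X n i) ^ k) -
          (((k.factorial : ℂ) / (n : ℂ) ^ k) •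
            ∑ v ∈ Finset.univ.filter (fun v : Fin k → Fin n => StrictMono v),
              (List.ofFn fun j : Fin k => tensorFactor X n (v j)).prod)‖ ≤
        (1 - ∏ j ∈ Finset.range k, (1 - (j : ℝ) / (n : ℝ))) * R ^ k) ∧
    Tendsto (fun n : ℕ => (1 - ∏ j ∈ Finset.range k, (1 - (j : ℝ) / (n : ℝ))) * R ^ k)
      atTop (nhds 0) := by
  have hR0 : 0 ≤ R := le_trans (norm_nonneg X) hR
  constructor
  · intro n hn
    classical
    have npos : 0 < n := lt_of_lt_of_le hk hn
    have hnR : (0:ℝ) < n := by exact_mod_cast npos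
    have hnC : (n : ℂ) ≠ 0 := by exact_mod_cast npos.ne'
    have hPf : ∀ f : Fin k → Fin n,
        ‖(List.ofFn fun j => tensorFactor X n (f j)).prod‖ ≤ R ^ k := by
      intro f
      have hlen : (List.ofFn fun j => tensorFactor X n (f j)).length = k :=
        List.length_ofFn
      have h := norm_prod_le_pow hR0 (List.ofFn fun j => tensorFactor X n (f j))
        (by rw [Ne, List.ofFn_eq_nil_iff]; omega)
        (fun a ha => by
          rw [List.mem_ofFn] at ha
          obtain ⟨j, rfl⟩ := ha
          exact le_trans (tensorFactor_norm_le X (f j)) hR)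
      rwa [hlen] at h
    have hcard : (Finset.univ.filter
        (fun f : Fin k → Fin n => ¬ Function.Injective f)).card
        = n ^ k - n.descFactorial k := by
      have h1 : (Finset.univ.filter
          (fun f : Fin k → Fin n => Function.Injective f)).card = n.descFactorial k := by
        rw [← Fintype.card_subtype,
          Fintype.card_congr (Equiv.subtypeInjectiveEquivEmbedding (Fin k) (Fin n)),
          Fintype.card_embedding_eq, Fintype.card_fin, Fintype.card_fin]
      have h2 := Finset.card_filter_add_card_filter_not
        (s := (Finset.univ : Finset (Fin k → Fin n)))
        (p := fun f : Fin k → Fin n => Function.Injective f)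
      have h3 : (Finset.univ : Finset (Fin k → Fin n)).card = n ^ k := by
        rw [Finset.card_univ, Fintype.card_fun, Fintype.card_fin, Fintype.card_fin]
      omega
    have hdesc : n.descFactorial k ≤ n ^ k := Nat.descFactorial_le_pow n k
    have harith : ((n:ℝ)⁻¹) ^ k * ((n ^ k - n.descFactorial k : ℕ) : ℝ)
        = 1 - ∏ j ∈ Finset.range k, (1 - (j : ℝ) / n) := by
      have hcongr : ∀ j ∈ Finset.range k, (1 - (j:ℝ)/n) = ((n - j : ℕ) : ℝ) / n := by
        intro j hj
        rw [Finset.mem_range] at hj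
        rw [Nat.cast_sub (le_of_lt (lt_of_lt_of_le hj hn))]
        field_simp
      rw [Finset.prod_congr rfl hcongr, Finset.prod_div_distrib, ← Nat.cast_prod,
        ← Nat.descFactorial_eq_prod_range, Finset.prod_const, Finset.card_range,
        Nat.cast_sub hdesc]
      push_cast
      field_simp
      rw [← mul_pow, one_div_mul_cancel hnR.ne', one_pow, one_mul]
    rw [smul_pow, sum_pow_eq]
    have hT : ((k.factorial : ℂ) / (n : ℂ) ^ k) •
        ∑ v ∈ Finset.univ.filter (fun v : Fin k → Fin n => StrictMono v),
          (List.ofFn fun j : Fin k => tensorFactor X n (v j)).prod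
        = ((n : ℂ)⁻¹) ^ k • ∑ f ∈ Finset.univ.filter
            (fun f : Fin k → Fin n => Function.Injective f),
            (List.ofFn fun j => tensorFactor X n (f j)).prod := by
      rw [sum_inj_eq, ← Nat.cast_smul_eq_nsmul ℂ, smul_smul]
      congr 1
      field_simp
      rw [mul_assoc, ← mul_pow, mul_one_div_cancel hnC, one_pow, mul_one]
    rw [hT]
    rw [← Finset.sum_filter_add_sum_filter_not Finset.univ
      (fun f : Fin k → Fin n => Function.Injective f)
      (fun f => (List.ofFn fun j => tensorFactor X n (f j)).prod)]
    rw [smul_add, add_sub_cancel_left]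
    calc ‖((n : ℂ)⁻¹) ^ k • ∑ f ∈ Finset.univ.filter
          (fun f : Fin k → Fin n => ¬ Function.Injective f),
          (List.ofFn fun j => tensorFactor X n (f j)).prod‖
        = ((n:ℝ)⁻¹) ^ k * ‖∑ f ∈ Finset.univ.filter
            (fun f : Fin k → Fin n => ¬ Function.Injective f),
            (List.ofFn fun j => tensorFactor X n (f j)).prod‖ := by
          rw [norm_smul, norm_pow, norm_inv, Complex.norm_natCast]
      _ ≤ ((n:ℝ)⁻¹) ^ k * (((n ^ k - n.descFactorial k : ℕ) : ℝ) * R ^ k) := by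
          refine mul_le_mul_of_nonneg_left ?_ (by positivity)
          calc ‖∑ f ∈ Finset.univ.filter
                (fun f : Fin k → Fin n => ¬ Function.Injective f),
                (List.ofFn fun j => tensorFactor X n (f j)).prod‖
              ≤ ∑ f ∈ Finset.univ.filter
                (fun f : Fin k → Fin n => ¬ Function.Injective f),
                ‖(List.ofFn fun j => tensorFactor X n (f j)).prod‖ :=
                norm_sum_le _ _
            _ ≤ (Finset.univ.filter
                (fun f : Fin k → Fin n => ¬ Function.Injective f)).card • R ^ k :=
                Finset.sum_le_card_nsmul _ _ _ (fun f _ => hPf f)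
            _ = ((n ^ k - n.descFactorial k : ℕ) : ℝ) * R ^ k := by
                rw [hcard, nsmul_eq_mul]
      _ = (1 - ∏ j ∈ Finset.range k, (1 - (j : ℝ) / n)) * R ^ k := by
          rw [← mul_assoc, harith]
  · have h1 : Tendsto (fun n : ℕ => ∏ j ∈ Finset.range k, (1 - (j:ℝ)/n)) atTop
        (nhds (∏ _j ∈ Finset.range k, (1:ℝ))) := by
      apply tendsto_finset_prod
      intro j _
      have h2 := (tendsto_const_div_atTop_nhds_zero_nat (j:ℝ)).const_sub 1
      simpa using h2
    rw [Finset.prod_const_one] at h1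
    have h3 := (h1.const_sub 1).mul_const (R ^ k)
    simpa using h3
end

section
/- (Multivariable Hadamard three-line theorem on a simplex tube) Let Δ = {x ∈ ℝ^N : x_j ≥ 0, Σ x_j ≤ 1} and let φ be bounded continuous on the tube Δ + iℝ^N ⊂ ℂ^N and holomorphic on its interior. If |φ(iy)| ≤ M_0 for all y ∈ ℝ^N and |φ(e_k + iy)| ≤ M_k for each k = 1,…,N and all y ∈ ℝ^N (with M_0,…,M_N > 0), then |φ(z)| ≤ M_0^{1-Σ_k Re z_k} ∏_{k=1}^N M_k^{Re z_k} for all z in the tube. -/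
open Complex

open Complex.HadamardThreeLines Set Filter Topology

/-- The tube over the standard simplex. -/
abbrev mvTube (N : ℕ) : Set (Fin N → ℂ) :=
  {z : Fin N → ℂ | (∀ j, 0 ≤ (z j).re) ∧ ∑ j, (z j).re ≤ 1}

/-- The open tube. -/
abbrev mvTubeInt (N : ℕ) : Set (Fin N → ℂ) :=
  {z : Fin N → ℂ | (∀ j, 0 < (z j).re) ∧ ∑ j, (z j).re < 1}

lemma mv_re_cont (N : ℕ) (j : Fin N) :
    Continuous (fun z : Fin N → ℂ => (z j).re) :=
  Complex.continuous_re.comp (continuous_apply j)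

lemma isOpen_mvTubeInt (N : ℕ) : IsOpen (mvTubeInt N) := by
  have : mvTubeInt N
      = (⋂ j, {z : Fin N → ℂ | 0 < (z j).re}) ∩ {z : Fin N → ℂ | ∑ j, (z j).re < 1} := by
    ext z; simp [mvTubeInt, Set.mem_iInter]
  rw [this]
  exact (isOpen_iInter_of_finite fun j =>
      isOpen_lt continuous_const (mv_re_cont N j)).inter
    (isOpen_lt (continuous_finset_sum _ fun j _ => mv_re_cont N j) continuous_const)

lemma mvTubeInt_subset_interior (N : ℕ) : mvTubeInt N ⊆ interior (mvTube N) :=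
  interior_maximal (fun z hz => ⟨fun j => (hz.1 j).le, hz.2.le⟩) (isOpen_mvTubeInt N)

lemma isClosed_mvTube (N : ℕ) : IsClosed (mvTube N) := by
  have : mvTube N
      = (⋂ j, {z : Fin N → ℂ | 0 ≤ (z j).re}) ∩ {z : Fin N → ℂ | ∑ j, (z j).re ≤ 1} := by
    ext z; simp [mvTube, Set.mem_iInter]
  rw [this]
  exact (isClosed_iInter fun j =>
      isClosed_le continuous_const (mv_re_cont N j)).inter
    (isClosed_le (continuous_finset_sum _ fun j _ => mv_re_cont N j) continuous_const)

lemma closure_vStrip : closure (verticalStrip 0 1) = verticalClosedStrip 0 1 := by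
  rw [verticalStrip, verticalClosedStrip, Complex.closure_preimage_re, closure_Ioo zero_ne_one]

lemma isOpen_vStrip : IsOpen (verticalStrip 0 1) :=
  isOpen_Ioo.preimage Complex.continuous_re

lemma vStrip_subset : verticalStrip 0 1 ⊆ verticalClosedStrip 0 1 :=
  fun w hw => ⟨hw.1.le, hw.2.le⟩

/-- A bounded continuous function on the tube, holomorphic in the interior, is
holomorphic along every affine complex line that maps the closed strip into the tube. -/
lemma mv_line_diff (N : ℕ) (φ : (Fin N → ℂ) → ℂ)
    (hcont : ContinuousOn φ (mvTube N))
    (hdiff : DifferentiableOn ℂ φ (interior (mvTube N)))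
    (a b : Fin N → ℂ)
    (hmap : Set.MapsTo (fun w : ℂ => fun j => a j + w * b j)
      (verticalClosedStrip 0 1) (mvTube N)) :
    DifferentiableOn ℂ (fun w : ℂ => φ (fun j => a j + w * b j)) (verticalStrip 0 1) := by
  set ℓ : ℂ → Fin N → ℂ := fun w j => a j + w * b j with hℓ
  obtain ⟨c0, hc0, hNc0⟩ : ∃ c : ℝ, 0 < c ∧ (N : ℝ) * c ≤ 1 / 2 := by
    refine ⟨1 / (2 * N + 1), by positivity, ?_⟩
    rw [mul_one_div, div_le_div_iff₀ (by positivity) (by norm_num)]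
    nlinarith [Nat.cast_nonneg (α := ℝ) N]
  obtain ⟨r, hr1⟩ : ∃ r : ℕ → ℝ, ∀ m, 1 - r m = 1 / (m + 2) :=
    ⟨fun m => 1 - 1 / (m + 2), fun m => by ring⟩
  have hrpos : ∀ m : ℕ, 0 < 1 - r m := fun m => by rw [hr1]; positivity
  have hrhalf : ∀ m : ℕ, 1 - r m ≤ 1 / 2 := by
    intro m
    rw [hr1]
    rw [div_le_div_iff₀ (by positivity) (by norm_num)]
    have : (0:ℝ) ≤ (m:ℝ) := Nat.cast_nonneg m
    linarith
  have hr0 : ∀ m : ℕ, (0:ℝ) ≤ r m := fun m => by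
    have := hrhalf m; linarith
  -- the approximating maps
  set P : ℕ → ℂ → Fin N → ℂ :=
    fun m w j => (r m : ℂ) * (a j + w * b j) + (((1 - r m) * c0 : ℝ) : ℂ) with hP
  have hPre : ∀ m w j, (P m w j).re = r m * (ℓ w j).re + (1 - r m) * c0 := by
    intro m w j
    simp [hP, hℓ, Complex.add_re, Complex.mul_re]
  have hPmem : ∀ m : ℕ, ∀ w ∈ verticalClosedStrip 0 1, P m w ∈ mvTubeInt N := by
    intro m w hw
    have hmem := hmap hw
    constructor
    · intro j
      rw [hPre]
      have := hmem.1 j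
      have := hrpos m
      nlinarith [hr0 m]
    · have hsum : ∑ j, (P m w j).re = r m * (∑ j, (ℓ w j).re) + (N:ℝ) * ((1 - r m) * c0) := by
        simp only [hPre, Finset.sum_add_distrib, ← Finset.mul_sum, Finset.sum_const,
          Finset.card_univ, Fintype.card_fin, nsmul_eq_mul]
        ring
      rw [hsum]
      have h1 : ∑ j, (ℓ w j).re ≤ 1 := hmem.2
      have h2 : (N:ℝ) * ((1 - r m) * c0) ≤ (1 - r m) * (1/2) := by
        have := hrpos m
        calc (N:ℝ) * ((1 - r m) * c0) = (1 - r m) * ((N:ℝ) * c0) := by ring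
        _ ≤ (1 - r m) * (1/2) := by
            exact mul_le_mul_of_nonneg_left hNc0 (hrpos m).le
      have hrm1 : r m < 1 := by have := hrpos m; linarith
      nlinarith [hr0 m]
  -- each approximant is holomorphic on the strip
  have hPdiff : ∀ m : ℕ, DifferentiableOn ℂ (fun w => φ (P m w)) (verticalStrip 0 1) := by
    intro m
    intro w hw
    have hφat : DifferentiableAt ℂ φ (P m w) :=
      hdiff.differentiableAt (isOpen_interior.mem_nhds
        (mvTubeInt_subset_interior N (hPmem m w (vStrip_subset hw))))
    have hPd : DifferentiableAt ℂ (fun w => P m w) w := by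
      apply differentiableAt_pi.mpr
      intro j
      simp only [hP]
      fun_prop
    exact (hφat.comp w hPd).differentiableWithinAt
  -- locally uniform convergence
  have hconv : TendstoLocallyUniformlyOn (fun m w => φ (P m w))
      (fun w => φ (ℓ w)) atTop (verticalStrip 0 1) := by
    rw [tendstoLocallyUniformlyOn_iff_forall_isCompact isOpen_vStrip]
    intro K hKs hK
    rw [Metric.tendstoUniformlyOn_iff]
    intro ε hε
    have hℓcont : Continuous ℓ := by
      apply continuous_pi
      intro j
      fun_prop
    obtain ⟨R1, hR1⟩ := hK.exists_bound_of_continuousOn hℓcont.continuousOn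
    obtain ⟨R2, hR2, hR2nn⟩ : ∃ R : ℝ, (∀ w ∈ K, ‖ℓ w‖ ≤ R) ∧ 0 ≤ R :=
      ⟨max R1 0, fun w hw => (hR1 w hw).trans (le_max_left _ _), le_max_right _ _⟩
    obtain ⟨D, hD, hDge⟩ : ∃ D : ℝ, 0 < D ∧ c0 + R2 ≤ D :=
      ⟨c0 + R2 + 1, by linarith, by linarith⟩
    have hdistP : ∀ m : ℕ, ∀ w ∈ K, dist (ℓ w) (P m w) ≤ (1 - r m) * D := by
      intro m w hw
      rw [dist_pi_le_iff (mul_nonneg (hrpos m).le hD.le)]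
      intro j
      have : ℓ w j - P m w j = ((1 - r m : ℝ) : ℂ) * (ℓ w j - (c0:ℂ)) := by
        simp only [hP, hℓ]
        push_cast
        ring
      rw [dist_eq_norm, this, norm_mul]
      have h1 : ‖((1 - r m : ℝ) : ℂ)‖ = 1 - r m := by
        rw [Complex.norm_real, Real.norm_of_nonneg (hrpos m).le]
      rw [h1]
      apply mul_le_mul_of_nonneg_left _ (hrpos m).le
      calc ‖ℓ w j - (c0:ℂ)‖ ≤ ‖ℓ w j‖ + ‖(c0:ℂ)‖ := norm_sub_le _ _
      _ ≤ R2 + c0 := by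
          gcongr
          · exact (norm_le_pi_norm (ℓ w) j).trans (hR2 w hw)
          · rw [Complex.norm_real, Real.norm_of_nonneg hc0.le]
      _ ≤ D := by linarith
    -- compact set where φ is uniformly continuous
    set Q : Set (Fin N → ℂ) := mvTube N ∩ Metric.closedBall 0 (R2 + D) with hQdef
    have hQc : IsCompact Q :=
      (isCompact_closedBall 0 (R2 + D)).inter_left (isClosed_mvTube N)
    have hQu : UniformContinuousOn φ Q :=
      hQc.uniformContinuousOn_of_continuous (hcont.mono inter_subset_left)
    obtain ⟨δ, hδ, hδ'⟩ := Metric.uniformContinuousOn_iff.mp hQu ε hε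
    have hKsub : K ⊆ verticalClosedStrip 0 1 := hKs.trans vStrip_subset
    have hℓQ : ∀ w ∈ K, ℓ w ∈ Q := by
      intro w hw
      refine ⟨hmap (hKsub hw), ?_⟩
      rw [Metric.mem_closedBall, dist_zero_right]
      have := hR2 w hw
      linarith
    have hPQ : ∀ m, ∀ w ∈ K, P m w ∈ Q := by
      intro m w hw
      have hsub : mvTubeInt N ⊆ mvTube N := fun x hx => ⟨fun j => (hx.1 j).le, hx.2.le⟩
      refine ⟨hsub (hPmem m w (hKsub hw)), ?_⟩
      rw [Metric.mem_closedBall, dist_zero_right]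
      calc ‖P m w‖ = dist (P m w) 0 := by rw [dist_zero_right]
      _ ≤ dist (P m w) (ℓ w) + dist (ℓ w) 0 := dist_triangle _ _ _
      _ ≤ (1 - r m) * D + R2 := by
          rw [dist_comm (P m w)]
          gcongr
          · exact hdistP m w hw
          · rw [dist_zero_right]; exact hR2 w hw
      _ ≤ R2 + D := by
          have h1 : (1 - r m) * D ≤ 1 * D :=
            mul_le_mul_of_nonneg_right (by linarith [hr0 m]) hD.le
          linarith
    have htend : Tendsto (fun m : ℕ => (1 - r m) * D) atTop (𝓝 0) := by
      have h1 : Tendsto (fun m : ℕ => (1 : ℝ) / (m + 2)) atTop (𝓝 0) := by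
        have := tendsto_one_div_add_atTop_nhds_zero_nat (𝕜 := ℝ)
        exact this.comp (tendsto_add_atTop_nat 1) |>.congr (by
          intro m; simp; push_cast; ring_nf)
      simp only [hr1]
      simpa using h1.mul_const D
    have hev : ∀ᶠ m : ℕ in atTop, (1 - r m) * D < δ :=
      htend (Iio_mem_nhds hδ)
    filter_upwards [hev] with m hm
    intro w hw
    have := hδ' (ℓ w) (hℓQ w hw) (P m w) (hPQ m w hw) (lt_of_le_of_lt (hdistP m w hw) hm)
    exact this
  exact hconv.differentiableOn (Eventually.of_forall hPdiff) isOpen_vStrip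

set_option maxHeartbeats 1000000 in
/-- Main induction. -/
theorem mvAux : ∀ (N : ℕ) (φ : (Fin N → ℂ) → ℂ) (M0 : ℝ) (M : Fin N → ℝ),
    0 < M0 → (∀ k, 0 < M k) →
    ContinuousOn φ (mvTube N) →
    (∃ C : ℝ, ∀ z ∈ mvTube N, ‖φ z‖ ≤ C) →
    (∀ a b : Fin N → ℂ, Set.MapsTo (fun w : ℂ => fun j => a j + w * b j)
        (verticalClosedStrip 0 1) (mvTube N) →
      DifferentiableOn ℂ (fun w : ℂ => φ (fun j => a j + w * b j)) (verticalStrip 0 1)) →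
    (∀ y : Fin N → ℝ, ‖φ (fun j => Complex.I * (y j : ℂ))‖ ≤ M0) →
    (∀ k : Fin N, ∀ y : Fin N → ℝ,
      ‖φ (fun j => (if j = k then (1:ℂ) else 0) + Complex.I * (y j : ℂ))‖ ≤ M k) →
    ∀ z ∈ mvTube N, ‖φ z‖ ≤ M0 ^ (1 - ∑ j, (z j).re) * ∏ k, M k ^ (z k).re := by
  intro N
  induction N with
  | zero =>
    intro φ M0 M hM0 hM hcont hbdd hline h0 hk z hz
    have hz0 : z = fun j : Fin 0 => Complex.I * (((fun _ => (0:ℝ)) j : ℝ) : ℂ) :=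
      funext fun j => Fin.elim0 j
    have : ‖φ z‖ ≤ M0 := by rw [hz0]; exact h0 _
    simpa using this
  | succ n ih =>
    intro φ M0 M hM0 hM hcont hbdd hline h0 hk
    obtain ⟨C, hC⟩ := hbdd
    -- ===== Face lemma: bound on the face `∑ re = 1` =====
    have face : ∀ z ∈ mvTube (n+1), ∑ j, (z j).re = 1 →
        ‖φ z‖ ≤ ∏ k, M k ^ (z k).re := by
      intro z hz hsum1
      set u : Fin n → ℂ := fun i => z i.castSucc with hu
      set t : ℝ := (z (Fin.last n)).im + ∑ i : Fin n, (z i.castSucc).im with ht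
      set Φ : (Fin n → ℂ) → (Fin (n+1) → ℂ) :=
        fun v => Fin.snoc v ((1:ℂ) - ∑ i, v i + Complex.I * (t:ℂ)) with hΦ
      have hΦc : ∀ v (i : Fin n), Φ v i.castSucc = v i := by
        intro v i; simp [hΦ]
      have hΦl : ∀ v, Φ v (Fin.last n) = (1:ℂ) - ∑ i, v i + Complex.I * (t:ℂ) := by
        intro v; simp [hΦ]
      have hΦlre : ∀ v : Fin n → ℂ,
          ((1:ℂ) - ∑ i, v i + Complex.I * (t:ℂ)).re = 1 - ∑ i, (v i).re := by
        intro v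
        simp [Complex.add_re, Complex.sub_re, Complex.re_sum]
      have hΦsum : ∀ v : Fin n → ℂ, ∑ j, (Φ v j).re = 1 := by
        intro v
        rw [Fin.sum_univ_castSucc]
        simp only [hΦc, hΦl, hΦlre]
        ring
      have hΦmem : ∀ v ∈ mvTube n, Φ v ∈ mvTube (n+1) := by
        intro v hv
        refine ⟨?_, by rw [hΦsum]⟩
        intro j
        induction j using Fin.lastCases with
        | last => rw [hΦl, hΦlre]; linarith [hv.2]
        | cast i => rw [hΦc]; exact hv.1 i
      have hΦcont : Continuous Φ := by
        apply continuous_pi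
        intro j
        induction j using Fin.lastCases with
        | last =>
          simp only [hΦl]
          exact ((continuous_const.sub
            (continuous_finset_sum _ fun i _ => continuous_apply i)).add continuous_const)
        | cast i =>
          simp only [hΦc]
          exact continuous_apply i
      -- hypotheses of the induction hypothesis for ψ = φ ∘ Φ
      have hcontψ : ContinuousOn (fun v => φ (Φ v)) (mvTube n) :=
        hcont.comp hΦcont.continuousOn hΦmem
      have hbddψ : ∃ C : ℝ, ∀ v ∈ mvTube n, ‖φ (Φ v)‖ ≤ C :=
        ⟨C, fun v hv => hC _ (hΦmem v hv)⟩
      have hlineψ : ∀ a b : Fin n → ℂ, Set.MapsTo (fun w : ℂ => fun j => a j + w * b j)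
          (verticalClosedStrip 0 1) (mvTube n) →
          DifferentiableOn ℂ (fun w : ℂ => φ (Φ (fun j => a j + w * b j)))
            (verticalStrip 0 1) := by
        intro a b hmap
        set A : Fin (n+1) → ℂ := Fin.snoc a ((1:ℂ) - ∑ i, a i + Complex.I * (t:ℂ)) with hA
        set B : Fin (n+1) → ℂ := Fin.snoc b (- ∑ i, b i) with hB
        have hkey : ∀ w : ℂ, (fun j => A j + w * B j) = Φ (fun j => a j + w * b j) := by
          intro w
          funext j
          induction j using Fin.lastCases with
          | last =>
            simp only [hA, hB, Fin.snoc_last, hΦl]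
            rw [Finset.sum_add_distrib, ← Finset.mul_sum]
            ring
          | cast i =>
            simp only [hA, hB, Fin.snoc_castSucc, hΦc]
        have hmap' : Set.MapsTo (fun w : ℂ => fun j => A j + w * B j)
            (verticalClosedStrip 0 1) (mvTube (n+1)) := by
          intro w hw
          show (fun j => A j + w * B j) ∈ mvTube (n+1)
          rw [hkey w]
          exact hΦmem _ (hmap hw)
        have := hline A B hmap'
        have heq : (fun w : ℂ => φ (fun j => A j + w * B j))
            = fun w : ℂ => φ (Φ (fun j => a j + w * b j)) := by
          funext w; rw [hkey w]
        rwa [heq] at this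
      have h0ψ : ∀ y : Fin n → ℝ,
          ‖φ (Φ (fun j => Complex.I * (y j : ℂ)))‖ ≤ M (Fin.last n) := by
        intro y
        set Y : Fin (n+1) → ℝ := Fin.snoc y (t - ∑ i, y i) with hY
        have : Φ (fun j => Complex.I * (y j : ℂ))
            = fun j => (if j = Fin.last n then (1:ℂ) else 0) + Complex.I * (Y j : ℂ) := by
          funext j
          induction j using Fin.lastCases with
          | last =>
            simp only [hΦl, hY, Fin.snoc_last, if_pos]
            rw [← Finset.mul_sum]
            push_cast
            ring
          | cast i =>
            simp only [hΦc, hY, Fin.snoc_castSucc]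
            rw [if_neg (Fin.castSucc_lt_last i).ne]
            ring
        rw [this]
        exact hk (Fin.last n) Y
      have hkψ : ∀ k : Fin n, ∀ y : Fin n → ℝ,
          ‖φ (Φ (fun j => (if j = k then (1:ℂ) else 0) + Complex.I * (y j : ℂ)))‖
            ≤ M k.castSucc := by
        intro k y
        set Y : Fin (n+1) → ℝ := Fin.snoc y (t - ∑ i, y i) with hY
        have : Φ (fun j => (if j = k then (1:ℂ) else 0) + Complex.I * (y j : ℂ))
            = fun j => (if j = k.castSucc then (1:ℂ) else 0) + Complex.I * (Y j : ℂ) := by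
          funext j
          induction j using Fin.lastCases with
          | last =>
            simp only [hΦl, hY, Fin.snoc_last]
            rw [if_neg (Fin.castSucc_lt_last k).ne']
            rw [Finset.sum_add_distrib, ← Finset.mul_sum]
            have h1 : ∑ j : Fin n, (if j = k then (1:ℂ) else 0) = 1 := by simp
            rw [h1]
            push_cast
            ring
          | cast i =>
            simp only [hΦc, hY, Fin.snoc_castSucc, Fin.castSucc_inj]
        rw [this]
        exact hk k.castSucc Y
      have Hih := ih (fun v => φ (Φ v)) (M (Fin.last n)) (fun k => M k.castSucc)
        (hM _) (fun k => hM _) hcontψ hbddψ hlineψ h0ψ hkψ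
      -- plug in u
      have hsplit : ∑ i : Fin n, (z i.castSucc).re + (z (Fin.last n)).re = 1 := by
        have h := hsum1
        rw [Fin.sum_univ_castSucc] at h
        exact h
      have humem : u ∈ mvTube n := by
        refine ⟨fun i => hz.1 _, ?_⟩
        have := hz.1 (Fin.last n)
        simp only [hu]
        linarith
      have hΦu : Φ u = z := by
        funext j
        induction j using Fin.lastCases with
        | last =>
          rw [hΦl]
          apply Complex.ext
          · rw [hΦlre]
            simp only [hu]
            linarith
          · simp only [Complex.add_im, Complex.sub_im, Complex.one_im, Complex.im_sum,
              Complex.mul_im, Complex.I_re, Complex.I_im, Complex.ofReal_re,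
              Complex.ofReal_im, hu, ht]
            ring
        | cast i => rw [hΦc]
      have Hu : ‖φ (Φ u)‖ ≤ M (Fin.last n) ^ (1 - ∑ i : Fin n, (u i).re)
          * ∏ k : Fin n, M k.castSucc ^ (u k).re := Hih u humem
      rw [hΦu] at Hu
      have hexp : 1 - ∑ i, (u i).re = (z (Fin.last n)).re := by
        simp only [hu]; linarith
      rw [hexp] at Hu
      calc ‖φ z‖ ≤ M (Fin.last n) ^ (z (Fin.last n)).re
          * ∏ k : Fin n, M k.castSucc ^ (u k).re := Hu
      _ = ∏ k, M k ^ (z k).re := by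
          rw [Fin.prod_univ_castSucc]
          simp only [hu]
          ring
    -- ===== Interior points via the one-variable three-lines theorem =====
    have key : ∀ z : Fin (n+1) → ℂ, (∀ j, 0 < (z j).re) → ∑ j, (z j).re < 1 →
        ‖φ z‖ ≤ M0 ^ (1 - ∑ j, (z j).re) * ∏ k, M k ^ (z k).re := by
      intro z hpos hlt
      set s : ℝ := ∑ j, (z j).re with hs
      have hs0 : 0 < s :=
        Finset.sum_pos (fun j _ => hpos j) Finset.univ_nonempty
      set ξ : Fin (n+1) → ℝ := fun j => (z j).re / s with hξ
      have hξpos : ∀ j, 0 < ξ j := fun j => div_pos (hpos j) hs0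
      have hξsum : ∑ j, ξ j = 1 := by
        rw [hξ]
        rw [← Finset.sum_div, ← hs, div_self hs0.ne']
      set a : Fin (n+1) → ℂ := fun j => Complex.I * ((z j).im : ℂ) with ha
      set b : Fin (n+1) → ℂ := fun j => ((ξ j : ℝ) : ℂ) with hb
      have hre : ∀ (w : ℂ) j, (a j + w * b j).re = ξ j * w.re := by
        intro w j
        simp [ha, hb, Complex.add_re, Complex.mul_re]
        ring
      have hsumre : ∀ w : ℂ, ∑ j, (a j + w * b j).re = w.re := by
        intro w
        simp only [hre, ← Finset.sum_mul]
        rw [hξsum, one_mul]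
      have hmapcl : Set.MapsTo (fun w : ℂ => fun j => a j + w * b j)
          (verticalClosedStrip 0 1) (mvTube (n+1)) := by
        intro w hw
        show (fun j => a j + w * b j) ∈ mvTube (n+1)
        refine ⟨fun j => ?_, ?_⟩
        · rw [hre]
          exact mul_nonneg (hξpos j).le hw.1
        · rw [hsumre]
          exact hw.2
      set F : ℂ → ℂ := fun w => φ (fun j => a j + w * b j) with hF
      have hd : DiffContOnCl ℂ F (verticalStrip 0 1) := by
        constructor
        · exact hline a b hmapcl
        · rw [closure_vStrip]
          apply hcont.comp _ hmapcl
          apply continuous_pi (fun j => by fun_prop) |>.continuousOn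
      have hB : BddAbove ((norm ∘ F) '' verticalClosedStrip 0 1) := by
        refine ⟨C, ?_⟩
        rintro x ⟨w, hw, rfl⟩
        exact hC _ (hmapcl hw)
      have haa : ∀ w ∈ Complex.re ⁻¹' {0}, ‖F w‖ ≤ M0 := by
        intro w hw
        have hw0 : w.re = 0 := hw
        have : (fun j => a j + w * b j)
            = fun j => Complex.I * (((fun j => ξ j * w.im + (z j).im) j : ℝ) : ℂ) := by
          funext j
          apply Complex.ext
          · rw [hre, hw0, mul_zero]
            simp [Complex.mul_re]
          · simp [ha, hb, Complex.add_im, Complex.mul_im]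
            ring
        show ‖φ (fun j => a j + w * b j)‖ ≤ M0
        rw [this]
        exact h0 _
      have hbb : ∀ w ∈ Complex.re ⁻¹' {1}, ‖F w‖ ≤ ∏ k, M k ^ ξ k := by
        intro w hw
        have hw1 : w.re = 1 := hw
        have hmem : (fun j => a j + w * b j) ∈ mvTube (n+1) :=
          hmapcl (show 0 ≤ w.re ∧ w.re ≤ 1 by rw [hw1]; exact ⟨zero_le_one, le_refl 1⟩)
        have hfsum : ∑ j, (a j + w * b j).re = 1 := by rw [hsumre, hw1]
        have := face _ hmem hfsum
        calc ‖F w‖ ≤ ∏ k, M k ^ (a k + w * b k).re := this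
        _ = ∏ k, M k ^ ξ k := by
            apply Finset.prod_congr rfl
            intro k _
            rw [hre, hw1, mul_one]
      have hsmem : (s:ℂ) ∈ verticalClosedStrip 0 1 := by
        constructor <;> simp [Complex.ofReal_re]
        · exact hs0.le
        · exact hlt.le
      have hmain := norm_le_interp_of_mem_verticalClosedStrip₀₁' F hsmem hd hB haa hbb
      have hFs : F (s:ℂ) = φ z := by
        show φ (fun j => a j + (s:ℂ) * b j) = φ z
        congr 1
        funext j
        apply Complex.ext
        · rw [hre, Complex.ofReal_re]
          simp only [hξ]
          exact div_mul_cancel₀ _ hs0.ne'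
        · simp [ha, hb, Complex.add_im, Complex.mul_im]
      rw [hFs, Complex.ofReal_re] at hmain
      calc ‖φ z‖ ≤ M0 ^ (1 - s) * (∏ k, M k ^ ξ k) ^ s := hmain
      _ = M0 ^ (1 - s) * ∏ k, M k ^ (z k).re := by
          congr 1
          rw [← Real.finset_prod_rpow _ _ (fun k _ => (Real.rpow_nonneg (hM k).le _)) s]
          apply Finset.prod_congr rfl
          intro k _
          rw [← Real.rpow_mul (hM k).le]
          congr 1
          simp only [hξ]
          exact div_mul_cancel₀ _ hs0.ne'
    -- ===== General points by approximation =====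
    intro z hz
    set c0 : ℝ := 1 / (2 * (n + 1)) with hc0def
    have hc0 : 0 < c0 := by positivity
    have hnc0 : ((n:ℝ) + 1) * c0 = 1 / 2 := by
      rw [hc0def]; field_simp
    set zf : ℝ → Fin (n+1) → ℂ :=
      fun ε j => ((1 - ε : ℝ) : ℂ) * z j + ((ε * c0 : ℝ) : ℂ) with hzf
    have hzfre : ∀ ε j, ((zf ε) j).re = (1 - ε) * (z j).re + ε * c0 := by
      intro ε j
      simp [hzf, Complex.add_re, Complex.mul_re]
    have hzfsum : ∀ ε, ∑ j, ((zf ε) j).re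
        = (1 - ε) * (∑ j, (z j).re) + ((n:ℝ) + 1) * (ε * c0) := by
      intro ε
      simp only [hzfre, Finset.sum_add_distrib, ← Finset.mul_sum, Finset.sum_const,
        Finset.card_univ, Fintype.card_fin, nsmul_eq_mul]
      push_cast
      ring
    have hball : ∀ ε ∈ Set.Ioc (0:ℝ) 1, (∀ j, 0 < ((zf ε) j).re)
        ∧ ∑ j, ((zf ε) j).re < 1 := by
      intro ε hε
      constructor
      · intro j
        rw [hzfre]
        have h1 : 0 ≤ (1 - ε) * (z j).re :=
          mul_nonneg (by linarith [hε.2]) (hz.1 j)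
        nlinarith [hε.1]
      · rw [hzfsum]
        have h1 : (1 - ε) * (∑ j, (z j).re) ≤ (1 - ε) * 1 :=
          mul_le_mul_of_nonneg_left hz.2 (by linarith [hε.2])
        have h2 : ((n:ℝ) + 1) * (ε * c0) = ε * (1/2) := by
          rw [show ((n:ℝ) + 1) * (ε * c0) = ε * (((n:ℝ) + 1) * c0) by ring, hnc0]
        rw [h2]
        nlinarith [hε.1]
    have hbound : ∀ ε ∈ Set.Ioc (0:ℝ) 1, ‖φ (zf ε)‖
        ≤ M0 ^ (1 - ∑ j, ((zf ε) j).re) * ∏ k, M k ^ ((zf ε) k).re := by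
      intro ε hε
      exact key (zf ε) (hball ε hε).1 (hball ε hε).2
    -- limit argument
    have hne : (𝓝[Set.Ioc (0:ℝ) 1] 0).NeBot := by
      rw [← mem_closure_iff_nhdsWithin_neBot, closure_Ioc one_ne_zero.symm]
      exact ⟨le_refl 0, zero_le_one⟩
    have htendz : Tendsto zf (𝓝 0) (𝓝 z) := by
      have hcz : Continuous zf := by
        apply continuous_pi
        intro j
        simp only [hzf]
        fun_prop
      have : zf 0 = z := by
        funext j; simp [hzf]
      exact hcz.tendsto' 0 z this
    have htendz' : Tendsto zf (𝓝[Set.Ioc (0:ℝ) 1] 0) (𝓝[mvTube (n+1)] z) := by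
      rw [tendsto_nhdsWithin_iff]
      constructor
      · exact htendz.mono_left nhdsWithin_le_nhds
      · filter_upwards [eventually_mem_nhdsWithin] with ε hε
        exact ⟨fun j => ((hball ε hε).1 j).le, ((hball ε hε).2).le⟩
    have hA : Tendsto (fun ε => ‖φ (zf ε)‖) (𝓝[Set.Ioc (0:ℝ) 1] 0) (𝓝 ‖φ z‖) :=
      (continuous_norm.tendsto _).comp ((hcont z hz).tendsto.comp htendz')
    have hrpow_cont : ∀ {bb : ℝ}, 0 < bb → Continuous fun r : ℝ => bb ^ r := by
      intro bb hbb
      simp only [Real.rpow_def_of_pos hbb]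
      exact Real.continuous_exp.comp (continuous_const.mul continuous_id)
    have hBt : Tendsto (fun ε => M0 ^ (1 - ∑ j, ((zf ε) j).re) * ∏ k, M k ^ ((zf ε) k).re)
        (𝓝[Set.Ioc (0:ℝ) 1] 0)
        (𝓝 (M0 ^ (1 - ∑ j, (z j).re) * ∏ k, M k ^ (z k).re)) := by
      have hre : ∀ j, Tendsto (fun ε => ((zf ε) j).re) (𝓝[Set.Ioc (0:ℝ) 1] 0)
          (𝓝 ((z j).re)) := by
        intro j
        exact ((mv_re_cont (n+1) j).tendsto z).comp
          (htendz.mono_left nhdsWithin_le_nhds)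
      have h1 : Tendsto (fun ε => M0 ^ (1 - ∑ j, ((zf ε) j).re))
          (𝓝[Set.Ioc (0:ℝ) 1] 0) (𝓝 (M0 ^ (1 - ∑ j, (z j).re))) := by
        apply ((hrpow_cont hM0).tendsto _).comp
        exact tendsto_const_nhds.sub (tendsto_finset_sum _ fun j _ => hre j)
      have h2 : Tendsto (fun ε => ∏ k, M k ^ ((zf ε) k).re)
          (𝓝[Set.Ioc (0:ℝ) 1] 0) (𝓝 (∏ k, M k ^ (z k).re)) := by
        apply tendsto_finset_prod
        intro k _
        exact ((hrpow_cont (hM k)).tendsto _).comp (hre k)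
      exact h1.mul h2
    exact le_of_tendsto_of_tendsto hA hBt
      (eventually_mem_nhdsWithin.mono fun ε hε => hbound ε hε)

/-- Multivariable Hadamard three-line theorem on the tube over the standard simplex:
if `φ` is bounded and continuous on the tube `{z : Re z ∈ Δ}` over
`Δ = {x : xⱼ ≥ 0, Σ xⱼ ≤ 1}`, holomorphic in its interior, with `|φ(iy)| ≤ M₀` and
`|φ(e_k + iy)| ≤ M_k` for all `y ∈ ℝ^N`, then
`|φ(z)| ≤ M₀^{1 - Σ Re z_k} ∏_k M_k^{Re z_k}` on the tube. -/
theorem multivariable_three_lines {N : ℕ} (φ : (Fin N → ℂ) → ℂ)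
    (M0 : ℝ) (M : Fin N → ℝ) (hM0 : 0 < M0) (hM : ∀ k, 0 < M k)
    (hcont : ContinuousOn φ
      {z : Fin N → ℂ | (∀ j, 0 ≤ (z j).re) ∧ ∑ j, (z j).re ≤ 1})
    (hbdd : ∃ C : ℝ, ∀ z ∈
      {z : Fin N → ℂ | (∀ j, 0 ≤ (z j).re) ∧ ∑ j, (z j).re ≤ 1}, ‖φ z‖ ≤ C)
    (hdiff : DifferentiableOn ℂ φ
      (interior {z : Fin N → ℂ | (∀ j, 0 ≤ (z j).re) ∧ ∑ j, (z j).re ≤ 1}))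
    (h0 : ∀ y : Fin N → ℝ, ‖φ (fun j => Complex.I * (y j : ℂ))‖ ≤ M0)
    (hk : ∀ k : Fin N, ∀ y : Fin N → ℝ,
      ‖φ (fun j => (if j = k then (1:ℂ) else 0) + Complex.I * (y j : ℂ))‖ ≤ M k) :
    ∀ z ∈ {z : Fin N → ℂ | (∀ j, 0 ≤ (z j).re) ∧ ∑ j, (z j).re ≤ 1},
      ‖φ z‖ ≤ M0 ^ (1 - ∑ j, (z j).re) * ∏ k, M k ^ (z k).re := by
  exact mvAux N φ M0 M hM0 hM hcont hbdd
    (fun a b hmap => mv_line_diff N φ hcont hdiff a b hmap) h0 hk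
end
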